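/- arXiv:2512.21062 — 7 statements merged into one kernel-verified Lean document; each statement's English description precedes it below -/
import Mathlib

section
/- Let M be a D×D integer matrix and k ∈ {1,…,n} such that M_{(k,l),(k,m)} = 0 for all 1 ≤ l,m ≤ r_k. Then for every permutation τ of {1,…,r_k}, successively applying the ordinary matrix mutations μ_{(k,τ(1))}, …, μ_{(k,τ(r_k))} to M yields the same matrix as successively applying μ_{(k,1)}, …, μ_{(k,r_k)}; that is, the composite mutation μ^c_k = μ_{(k,r_k)} ∘ ⋯ ∘ μ_{(k,1)} is independent of the order of composition. -/
/-- `[x]₊ = max(x,0)`. -/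
def intPos (x : ℤ) : ℤ := max x 0

/-- The index set `D = {(i,l) : 1 ≤ i ≤ n, 1 ≤ l ≤ r i}`. -/
abbrev DIdx (n : ℕ) (r : Fin n → ℕ) := Σ i : Fin n, Fin (r i)

/-- Ordinary matrix mutation of a `D × D` integer matrix in direction `p`. -/
def matMut {n : ℕ} {r : Fin n → ℕ} (M : DIdx n r → DIdx n r → ℤ) (p : DIdx n r) :
    DIdx n r → DIdx n r → ℤ :=
  fun d e =>
    if d = p ∨ e = p then -M d e
    else M d e + M d p * intPos (M p e) + intPos (-(M d p)) * M p e

lemma intPos_zero : intPos 0 = 0 := rfl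

lemma intPos_neg_zero : intPos (-0) = 0 := rfl

section Aux

variable {n : ℕ} {r : Fin n → ℕ} (k : Fin n)

/-- Matrices with vanishing `(k,·),(k,·)` block. -/
def ZeroBlock (M : DIdx n r → DIdx n r → ℤ) : Prop :=
  ∀ l m : Fin (r k), M ⟨k, l⟩ ⟨k, m⟩ = 0

lemma zeroBlock_matMut {M : DIdx n r → DIdx n r → ℤ} (hM : ZeroBlock k M)
    (l : Fin (r k)) : ZeroBlock k (matMut M ⟨k, l⟩) := by
  have h0 : ∀ x y : Fin (r k), M ⟨k, x⟩ ⟨k, y⟩ = 0 := hM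
  intro a b
  simp [matMut, h0, intPos]

lemma matMut_comm {M : DIdx n r → DIdx n r → ℤ} (hM : ZeroBlock k M)
    (l m : Fin (r k)) :
    matMut (matMut M ⟨k, l⟩) ⟨k, m⟩ = matMut (matMut M ⟨k, m⟩) ⟨k, l⟩ := by
  rcases eq_or_ne l m with rfl | hlm
  · rfl
  have h0 : ∀ x y : Fin (r k), M ⟨k, x⟩ ⟨k, y⟩ = 0 := hM
  have hne1 : (⟨k, l⟩ : DIdx n r) ≠ ⟨k, m⟩ := by
    simp [Sigma.mk.inj_iff, hlm]
  have hne2 : (⟨k, m⟩ : DIdx n r) ≠ ⟨k, l⟩ := hne1.symm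
  funext d e
  by_cases hdp : d = (⟨k, l⟩ : DIdx n r) <;> by_cases hdq : d = (⟨k, m⟩ : DIdx n r) <;>
    by_cases hep : e = (⟨k, l⟩ : DIdx n r) <;> by_cases heq2 : e = (⟨k, m⟩ : DIdx n r) <;>
    simp_all [matMut, h0, intPos] <;> ring

end Aux

/-- If the `(k,·),(k,·)` block of `M` vanishes, then for any permutation `τ`
of `{1,…,r_k}`, successively applying `μ_{(k,τ(1))}, …, μ_{(k,τ(r_k))}` to `M` yields the same
matrix as successively applying `μ_{(k,1)}, …, μ_{(k,r_k)}`. -/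
theorem composite_mutation_order_independent {n : ℕ} (hn : 1 ≤ n) (r : Fin n → ℕ)
    (hr : ∀ i, 1 ≤ r i) (M : DIdx n r → DIdx n r → ℤ) (k : Fin n)
    (hM : ∀ l m : Fin (r k), M ⟨k, l⟩ ⟨k, m⟩ = 0) (τ : Equiv.Perm (Fin (r k))) :
    ((List.finRange (r k)).map τ).foldl (fun N l => matMut N ⟨k, l⟩) M
      = (List.finRange (r k)).foldl (fun N l => matMut N ⟨k, l⟩) M := by
  -- work in the subtype of zero-block matrices
  let S := {N : DIdx n r → DIdx n r → ℤ // ZeroBlock k N}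
  let g : S → Fin (r k) → S := fun N l => ⟨matMut N.1 ⟨k, l⟩, zeroBlock_matMut k N.2 l⟩
  have hg : ∀ (N : S) (l₁ l₂ : Fin (r k)), g (g N l₁) l₂ = g (g N l₂) l₁ := by
    intro N l₁ l₂
    exact Subtype.ext (matMut_comm k N.2 l₁ l₂)
  haveI : RightCommutative g := ⟨hg⟩
  have hproj : ∀ (L : List (Fin (r k))) (N : S),
      (L.foldl g N).1 = L.foldl (fun N l => matMut N ⟨k, l⟩) N.1 := by
    intro L
    induction L with
    | nil => intro N; rfl
    | cons a L ih => intro N; exact ih (g N a)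
  have hperm : List.Perm ((List.finRange (r k)).map τ) (List.finRange (r k)) := by
    have hnd : ((List.finRange (r k)).map τ).Nodup :=
      (List.nodup_finRange _).map τ.injective
    have hsub : ((List.finRange (r k)).map τ) ⊆ List.finRange (r k) := by
      intro x _; exact List.mem_finRange x
    have hsp := hnd.subperm hsub
    exact hsp.perm_of_length_le (by simp)
  have := hperm.foldl_eq (f := g) ⟨M, hM⟩
  calc ((List.finRange (r k)).map τ).foldl (fun N l => matMut N ⟨k, l⟩) M
      = ((((List.finRange (r k)).map τ)).foldl g ⟨M, hM⟩).1 :=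
        (hproj _ ⟨M, hM⟩).symm
    _ = ((List.finRange (r k)).foldl g ⟨M, hM⟩).1 := by rw [this]
    _ = (List.finRange (r k)).foldl (fun N l => matMut N ⟨k, l⟩) M :=
        hproj _ ⟨M, hM⟩
end

section
/- Let P' be a semifield, let b be an n×n integer matrix with b_{kk} = 0 for a fixed k ∈ {1,…,n}, and let (y, 𝓑) be an ordinary Y-seed of rank D whose matrix 𝓑 is the enlargement of b. Let (y'', M'') be obtained from (y, 𝓑) by successively mutating in directions (k,1), (k,2), …, (k,r_k). Then y''_{(k,l)} = (y_{(k,l)})^{-1} for 1 ≤ l ≤ r_k, and for every i ≠ k and 1 ≤ l ≤ r_i, y''_{(i,l)} = y_{(i,l)} · (∏_{m=1}^{r_k} y_{(k,m)})^{[b_{ki}]_+} · (∏_{m=1}^{r_k} (1 ⊕ y_{(k,m)}))^{−b_{ki}}. -/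
/-- The enlargement of an `n × n` integer matrix `B`. -/
def enlarge {n : ℕ} (r : Fin n → ℕ) (B : Matrix (Fin n) (Fin n) ℤ) :
    DIdx n r → DIdx n r → ℤ :=
  fun d e => B d.1 e.1

/-- Mutation of an ordinary `Y`-seed `(y, M)` (with coefficients in a semifield `P` whose
auxiliary addition is `add`) in direction `p`. -/
def ySeedMut {n : ℕ} {r : Fin n → ℕ} {P : Type*} [CommGroup P] (add : P → P → P)
    (yM : (DIdx n r → P) × (DIdx n r → DIdx n r → ℤ)) (p : DIdx n r) :
    (DIdx n r → P) × (DIdx n r → DIdx n r → ℤ) :=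
  (fun d =>
      if d = p then (yM.1 p)⁻¹
      else yM.1 d * yM.1 p ^ intPos (yM.2 p d) * add 1 (yM.1 p) ^ (-(yM.2 p d)),
    matMut yM.2 p)

theorem aux_inv {n : ℕ} (r : Fin n → ℕ) {P : Type*} [CommGroup P] (add : P → P → P)
    (b : Matrix (Fin n) (Fin n) ℤ) (k : Fin n) (hb : b k k = 0)
    (y : DIdx n r → P) (t : ℕ) (ht : t ≤ r k) :
    ∀ S, S = ((List.finRange (r k)).take t).foldl (fun s l => ySeedMut add s ⟨k, l⟩)
      (y, enlarge r b) →
    (∀ d e : DIdx n r, d.1 = k → e.1 = k → S.2 d e = 0) ∧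
    (∀ m : Fin (r k), t ≤ (m:ℕ) → ∀ e, S.2 ⟨k, m⟩ e = b k e.1) ∧
    (∀ m : Fin (r k), (m:ℕ) < t → S.1 ⟨k, m⟩ = (y ⟨k, m⟩)⁻¹) ∧
    (∀ m : Fin (r k), t ≤ (m:ℕ) → S.1 ⟨k, m⟩ = y ⟨k, m⟩) ∧
    (∀ i : Fin n, i ≠ k → ∀ l : Fin (r i),
      S.1 ⟨i, l⟩ = y ⟨i, l⟩
        * (∏ m ∈ Finset.univ.filter (fun m : Fin (r k) => (m:ℕ) < t), y ⟨k, m⟩) ^ intPos (b k i)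
        * (∏ m ∈ Finset.univ.filter (fun m : Fin (r k) => (m:ℕ) < t), add 1 (y ⟨k, m⟩)) ^ (-(b k i))) := by
  induction t with
  | zero =>
    intro S hS
    subst hS
    refine ⟨?_, ?_, ?_, ?_, ?_⟩
    · intro d e hd he
      simp [enlarge, hd, he, hb]
    · intro m _ e; simp [enlarge]
    · intro m hm; omega
    · intro m _; rfl
    · intro i hi l
      simp [intPos]
  | succ t ih =>
    intro S hS
    have ht' : t < r k := ht
    obtain ⟨hA, hB, hC, hD, hE⟩ := ih (le_of_lt ht') _ rfl
    set Sold := ((List.finRange (r k)).take t).foldl (fun s l => ySeedMut add s ⟨k, l⟩)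
      (y, enlarge r b) with hSold
    have htake : (List.finRange (r k)).take (t+1)
        = (List.finRange (r k)).take t ++ [⟨t, ht'⟩] := by
      rw [List.take_succ]
      have : (List.finRange (r k))[t]? = some ⟨t, ht'⟩ := by
        rw [List.getElem?_eq_getElem (by simpa using ht')]
        simp
      simp [this]
    have hSval : S = ySeedMut add Sold ⟨k, ⟨t, ht'⟩⟩ := by
      rw [hS, htake, List.foldl_append]
      rfl
    set p : DIdx n r := ⟨k, ⟨t, ht'⟩⟩ with hp
    have hpk : p.1 = k := rfl
    -- matrix facts
    have hA' : ∀ d e : DIdx n r, d.1 = k → e.1 = k → S.2 d e = 0 := by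
      intro d e hd he
      rw [hSval]
      show matMut Sold.2 p d e = 0
      unfold matMut
      by_cases h : d = p ∨ e = p
      · simp [h, hA d e hd he]
      · simp only [h, if_false]
        rw [hA d e hd he, hA d p hd hpk]
        simp [intPos]
    have hB' : ∀ m : Fin (r k), t + 1 ≤ (m:ℕ) → ∀ e, S.2 ⟨k, m⟩ e = b k e.1 := by
      intro m hm e
      rw [hSval]
      show matMut Sold.2 p ⟨k, m⟩ e = b k e.1
      have hne : (⟨k, m⟩ : DIdx n r) ≠ p := by
        simp only [hp, ne_eq, Sigma.mk.inj_iff, heq_eq_eq, true_and]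
        intro h; rw [h] at hm; simp at hm
      unfold matMut
      by_cases he : e = p
      · subst he
        simp only [hne, or_true, if_true]
        rw [hA ⟨k, m⟩ p rfl hpk]
        simpa using hb.symm
      · simp only [hne, he, or_self, if_false]
        rw [hA ⟨k, m⟩ p rfl hpk, hB m (le_of_lt hm) e]
        simp [intPos]
    refine ⟨hA', hB', ?_, ?_, ?_⟩
    · intro m hm
      rw [hSval]
      show (if (⟨k, m⟩ : DIdx n r) = p then (Sold.1 p)⁻¹
        else Sold.1 ⟨k, m⟩ * Sold.1 p ^ intPos (Sold.2 p ⟨k, m⟩)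
          * add 1 (Sold.1 p) ^ (-(Sold.2 p ⟨k, m⟩))) = (y ⟨k, m⟩)⁻¹
      by_cases h : (⟨k, m⟩ : DIdx n r) = p
      · have hmt : m = ⟨t, ht'⟩ := by
          have := h
          simp only [hp, Sigma.mk.inj_iff, heq_eq_eq, true_and] at this
          exact this
        rw [if_pos h, hD ⟨t, ht'⟩ (le_refl t), hmt]
      · have hmt : (m : ℕ) < t := by
          rcases Nat.lt_succ_iff_lt_or_eq.mp hm with h' | h'
          · exact h'
          · exfalso; apply h; simp [hp, Fin.ext_iff, h']
        rw [if_neg h, hA p ⟨k, m⟩ hpk rfl]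
        simp [intPos, hC m hmt]
    · intro m hm
      rw [hSval]
      show (if (⟨k, m⟩ : DIdx n r) = p then (Sold.1 p)⁻¹
        else Sold.1 ⟨k, m⟩ * Sold.1 p ^ intPos (Sold.2 p ⟨k, m⟩)
          * add 1 (Sold.1 p) ^ (-(Sold.2 p ⟨k, m⟩))) = y ⟨k, m⟩
      have h : (⟨k, m⟩ : DIdx n r) ≠ p := by
        simp only [hp, ne_eq, Sigma.mk.inj_iff, heq_eq_eq, true_and]
        intro h'; rw [h'] at hm; simp at hm
      rw [if_neg h, hA p ⟨k, m⟩ hpk rfl]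
      simp [intPos, hD m (by omega)]
    · intro i hi l
      rw [hSval]
      show (if (⟨i, l⟩ : DIdx n r) = p then (Sold.1 p)⁻¹
        else Sold.1 ⟨i, l⟩ * Sold.1 p ^ intPos (Sold.2 p ⟨i, l⟩)
          * add 1 (Sold.1 p) ^ (-(Sold.2 p ⟨i, l⟩))) = _
      have h : (⟨i, l⟩ : DIdx n r) ≠ p := by
        simp only [hp, ne_eq, Sigma.mk.inj_iff]
        intro h'; exact hi h'.1
      rw [if_neg h, hB ⟨t, ht'⟩ (le_refl t) ⟨i, l⟩, hD ⟨t, ht'⟩ (le_refl t),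
        hE i hi l]
      have hfil : Finset.univ.filter (fun m : Fin (r k) => (m:ℕ) < t + 1)
          = insert ⟨t, ht'⟩ (Finset.univ.filter (fun m : Fin (r k) => (m:ℕ) < t)) := by
        ext m
        simp [Fin.ext_iff]
        omega
      have hnotmem : (⟨t, ht'⟩ : Fin (r k)) ∉
          Finset.univ.filter (fun m : Fin (r k) => (m:ℕ) < t) := by simp
      rw [hfil, Finset.prod_insert hnotmem, Finset.prod_insert hnotmem,
        mul_zpow, mul_zpow]
      show _ = _
      simp only [mul_comm, mul_left_comm, mul_assoc]

/-- Mutating an ordinary `Y`-seed whose matrix is the enlargement of `b`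
successively in directions `(k,1), …, (k,r_k)` inverts the `y`-variables in block `k` and
multiplies the others by the indicated monomial in the block-`k` variables. -/
theorem composite_Y_seed_mutation {n : ℕ} (hn : 1 ≤ n) (r : Fin n → ℕ) (hr : ∀ i, 1 ≤ r i)
    (P : Type*) [CommGroup P] (add : P → P → P)
    (hcomm : ∀ a b : P, add a b = add b a)
    (hassoc : ∀ a b c : P, add (add a b) c = add a (add b c))
    (hdistrib : ∀ p q₁ q₂ : P, p * add q₁ q₂ = add (p * q₁) (p * q₂))
    (b : Matrix (Fin n) (Fin n) ℤ) (k : Fin n) (hb : b k k = 0)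
    (y : DIdx n r → P) :
    letI res := (List.finRange (r k)).foldl (fun s l => ySeedMut add s ⟨k, l⟩)
      (y, enlarge r b)
    (∀ l : Fin (r k), res.1 ⟨k, l⟩ = (y ⟨k, l⟩)⁻¹) ∧
    (∀ i : Fin n, i ≠ k → ∀ l : Fin (r i),
      res.1 ⟨i, l⟩ = y ⟨i, l⟩ * (∏ m : Fin (r k), y ⟨k, m⟩) ^ intPos (b k i)
        * (∏ m : Fin (r k), add 1 (y ⟨k, m⟩)) ^ (-(b k i))) := by
  have hres : (List.finRange (r k)).foldl (fun s l => ySeedMut add s ⟨k, l⟩)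
      (y, enlarge r b) = ((List.finRange (r k)).take (r k)).foldl
      (fun s l => ySeedMut add s ⟨k, l⟩) (y, enlarge r b) := by
    rw [List.take_of_length_le (by simp)]
  obtain ⟨_, _, hC, _, hE⟩ := aux_inv r add b k hb y (r k) (le_refl _) _ hres
  have hfil : Finset.univ.filter (fun m : Fin (r k) => (m:ℕ) < r k) = Finset.univ := by
    ext m; simp [m.isLt]
  constructor
  · intro l; exact hC l l.isLt
  · intro i hi l
    rw [hE i hi l, hfil]
end

section
/- Let P' be a semifield, F a field, ι : P' → F a multiplicative map with nonzero values, let b be an n×n integer matrix with b_{kk} = 0 for a fixed k ∈ {1,…,n}, and let (x, y, 𝓑) be an ordinary seed of rank D whose matrix 𝓑 is the enlargement of b. Let (x'', y'', M'') be obtained from (x, y, 𝓑) by successively mutating in directions (k,1), (k,2), …, (k,r_k). Then for 1 ≤ l ≤ r_k, x''_{(k,l)} = (x_{(k,l)})^{-1} · (∏_{(j,m)∈D} x_{(j,m)}^{[−b_{jk}]_+}) · (1 + ŷ_{(k,l)}) · ι(1 ⊕ y_{(k,l)})^{-1}, where ŷ_{(k,l)} = ι(y_{(k,l)}) · ∏_{(j,m)∈D}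 x_{(j,m)}^{b_{jk}}, and x''_{(i,l)} = x_{(i,l)} for all i ≠ k. -/
/-- The `ŷ`-variable of an ordinary seed `(x, y, M)` at index `d`. -/
def yhat {n : ℕ} {r : Fin n → ℕ} {P F : Type*} [CommGroup P] [Field F] (ι : P → F)
    (x : DIdx n r → F) (y : DIdx n r → P) (M : DIdx n r → DIdx n r → ℤ) (d : DIdx n r) : F :=
  ι (y d) * ∏ e : DIdx n r, x e ^ M e d

/-- Mutation of an ordinary seed `(x, y, M)` in direction `p`. -/
def seedMut {n : ℕ} {r : Fin n → ℕ} {P F : Type*} [CommGroup P] [Field F]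
    (add : P → P → P) (ι : P → F)
    (s : (DIdx n r → F) × (DIdx n r → P) × (DIdx n r → DIdx n r → ℤ)) (p : DIdx n r) :
    (DIdx n r → F) × (DIdx n r → P) × (DIdx n r → DIdx n r → ℤ) :=
  (fun d =>
      if d = p then
        (s.1 p)⁻¹ * (∏ e : DIdx n r, s.1 e ^ intPos (-(s.2.2 e p)))
          * (1 + yhat ι s.1 s.2.1 s.2.2 p) * (ι (add 1 (s.2.1 p)))⁻¹
      else s.1 d,
    fun d =>
      if d = p then (s.2.1 p)⁻¹
      else s.2.1 d * s.2.1 p ^ intPos (s.2.2 p d) * add 1 (s.2.1 p) ^ (-(s.2.2 p d)),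
    matMut s.2.2 p)

theorem key {n : ℕ} {r : Fin n → ℕ} {P F : Type*} [CommGroup P] [Field F]
    (add : P → P → P) (ι : P → F)
    (b : Matrix (Fin n) (Fin n) ℤ) (k : Fin n) (hb : b k k = 0)
    (x : DIdx n r → F) (y : DIdx n r → P)
    (L : List (Fin (r k))) (hnd : L.Nodup)
    (s : (DIdx n r → F) × (DIdx n r → P) × (DIdx n r → DIdx n r → ℤ))
    (hA : ∀ l ∈ L, s.2.1 ⟨k,l⟩ = y ⟨k,l⟩)
    (hB : ∀ l ∈ L, ∀ e, s.2.2 e ⟨k,l⟩ = b e.1 k)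
    (hC : ∀ l ∈ L, ∀ e, s.2.2 ⟨k,l⟩ e = b k e.1)
    (hD : ∀ e : DIdx n r, e.1 ≠ k → s.1 e = x e)
    (hE : ∀ l ∈ L, s.1 ⟨k,l⟩ = x ⟨k,l⟩) :
    (∀ l ∈ L, (L.foldl (fun s l => seedMut add ι s ⟨k,l⟩) s).1 ⟨k,l⟩ =
        (x ⟨k, l⟩)⁻¹ * (∏ d : DIdx n r, x d ^ intPos (-(b d.1 k)))
        * (1 + ι (y ⟨k, l⟩) * ∏ d : DIdx n r, x d ^ b d.1 k)
        * (ι (add 1 (y ⟨k, l⟩)))⁻¹) ∧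
    (∀ d : DIdx n r, (∀ l ∈ L, d ≠ ⟨k,l⟩) →
        (L.foldl (fun s l => seedMut add ι s ⟨k,l⟩) s).1 d = s.1 d) := by
  induction L generalizing s with
  | nil => exact ⟨by simp, fun d _ => rfl⟩
  | cons l₀ L' ih =>
    have hl₀ : l₀ ∈ l₀ :: L' := List.mem_cons_self
    have hl₀n : l₀ ∉ L' := (List.nodup_cons.1 hnd).1
    have hnd' : L'.Nodup := (List.nodup_cons.1 hnd).2
    have hne : ∀ l ∈ L', (⟨k,l⟩ : DIdx n r) ≠ ⟨k,l₀⟩ := by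
      intro l hl h
      simp only [Sigma.mk.inj_iff, heq_eq_eq, true_and] at h
      exact hl₀n (h ▸ hl)
    set s' := seedMut add ι s ⟨k,l₀⟩ with hs'
    have hkk : ∀ e : DIdx n r, e.1 = k → b e.1 k = 0 := fun e h => by rw [h, hb]
    have hBp := hB l₀ hl₀
    have hCp := hC l₀ hl₀
    -- the value of the new variable at p
    have hprod1 : (∏ e : DIdx n r, s.1 e ^ intPos (-(s.2.2 e ⟨k,l₀⟩)))
        = ∏ e : DIdx n r, x e ^ intPos (-(b e.1 k)) := by
      refine Finset.prod_congr rfl fun e _ => ?_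
      rw [hBp e]
      by_cases h : e.1 = k
      · rw [hkk e h]; simp [intPos]
      · rw [hD e h]
    have hprod2 : (∏ e : DIdx n r, s.1 e ^ s.2.2 e ⟨k,l₀⟩)
        = ∏ e : DIdx n r, x e ^ b e.1 k := by
      refine Finset.prod_congr rfl fun e _ => ?_
      rw [hBp e]
      by_cases h : e.1 = k
      · rw [hkk e h]; simp
      · rw [hD e h]
    have hxp : s'.1 ⟨k,l₀⟩ =
        (x ⟨k, l₀⟩)⁻¹ * (∏ d : DIdx n r, x d ^ intPos (-(b d.1 k)))
        * (1 + ι (y ⟨k, l₀⟩) * ∏ d : DIdx n r, x d ^ b d.1 k)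
        * (ι (add 1 (y ⟨k, l₀⟩)))⁻¹ := by
      show (if ((⟨k,l₀⟩ : DIdx n r) = ⟨k,l₀⟩) then _ else _) = _
      rw [if_pos rfl, yhat, hE l₀ hl₀, hA l₀ hl₀, hprod1, hprod2]
    -- invariants for s'
    have hA' : ∀ l ∈ L', s'.2.1 ⟨k,l⟩ = y ⟨k,l⟩ := by
      intro l hl
      show (if ((⟨k,l⟩ : DIdx n r) = ⟨k,l₀⟩) then _ else _) = _
      rw [if_neg (hne l hl), hCp ⟨k,l⟩, hb, hA l (List.mem_cons_of_mem _ hl)]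
      simp [intPos]
    have hB' : ∀ l ∈ L', ∀ e, s'.2.2 e ⟨k,l⟩ = b e.1 k := by
      intro l hl e
      show matMut s.2.2 ⟨k,l₀⟩ e ⟨k,l⟩ = _
      rw [matMut]
      by_cases h : e = ⟨k,l₀⟩
      · subst h; rw [if_pos (Or.inl rfl), hCp ⟨k,l⟩]; simp [hb]
      · rw [if_neg (by push_neg; exact ⟨h, hne l hl⟩), hB l (List.mem_cons_of_mem _ hl) e,
          hBp e, hCp ⟨k,l⟩, hb]
        simp [intPos]
    have hC' : ∀ l ∈ L', ∀ e, s'.2.2 ⟨k,l⟩ e = b k e.1 := by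
      intro l hl e
      show matMut s.2.2 ⟨k,l₀⟩ ⟨k,l⟩ e = _
      rw [matMut]
      by_cases h : e = ⟨k,l₀⟩
      · subst h; rw [if_pos (Or.inr rfl), hBp ⟨k,l⟩]; simp [hb]
      · rw [if_neg (by push_neg; exact ⟨hne l hl, h⟩), hC l (List.mem_cons_of_mem _ hl) e,
          hBp ⟨k,l⟩, hCp e]
        simp [hkk ⟨k,l⟩ rfl, intPos]
    have hD' : ∀ e : DIdx n r, e.1 ≠ k → s'.1 e = x e := by
      intro e h
      show (if (e = ⟨k,l₀⟩) then _ else _) = _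
      rw [if_neg (by rintro rfl; exact h rfl), hD e h]
    have hE' : ∀ l ∈ L', s'.1 ⟨k,l⟩ = x ⟨k,l⟩ := by
      intro l hl
      show (if ((⟨k,l⟩ : DIdx n r) = ⟨k,l₀⟩) then _ else _) = _
      rw [if_neg (hne l hl), hE l (List.mem_cons_of_mem _ hl)]
    obtain ⟨ih1, ih2⟩ := ih hnd' s' hA' hB' hC' hD' hE'
    constructor
    · intro l hl
      rw [List.foldl_cons]
      rcases List.mem_cons.1 hl with h | h
      · subst h
        rw [ih2 ⟨k,l⟩ (fun l' hl' h => hl₀n (by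
            simp only [Sigma.mk.inj_iff, heq_eq_eq, true_and] at h; exact h ▸ hl')), hxp]
      · exact ih1 l h
    · intro d hd
      rw [List.foldl_cons, ih2 d (fun l hl => hd l (List.mem_cons_of_mem _ hl))]
      show (if (d = ⟨k,l₀⟩) then _ else _) = _
      rw [if_neg (hd l₀ hl₀)]

/-- Mutating an ordinary seed whose matrix is the enlargement of `b`
successively in directions `(k,1), …, (k,r_k)` exchanges the cluster variables of block `k`
by the indicated binomial exchange relation and fixes the remaining ones. -/
theorem composite_seed_mutation {n : ℕ} (hn : 1 ≤ n) (r : Fin n → ℕ) (hr : ∀ i, 1 ≤ r i)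
    (P : Type*) [CommGroup P] (add : P → P → P)
    (hcomm : ∀ a b : P, add a b = add b a)
    (hassoc : ∀ a b c : P, add (add a b) c = add a (add b c))
    (hdistrib : ∀ p q₁ q₂ : P, p * add q₁ q₂ = add (p * q₁) (p * q₂))
    (F : Type*) [Field F] (ι : P → F)
    (hι : ∀ p q : P, ι (p * q) = ι p * ι q) (hι0 : ∀ p : P, ι p ≠ 0)
    (b : Matrix (Fin n) (Fin n) ℤ) (k : Fin n) (hb : b k k = 0)
    (x : DIdx n r → F) (hx : ∀ d, x d ≠ 0) (y : DIdx n r → P) :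
    letI res := (List.finRange (r k)).foldl (fun s l => seedMut add ι s ⟨k, l⟩)
      (x, y, enlarge r b)
    (∀ l : Fin (r k),
      res.1 ⟨k, l⟩ = (x ⟨k, l⟩)⁻¹ * (∏ d : DIdx n r, x d ^ intPos (-(b d.1 k)))
        * (1 + ι (y ⟨k, l⟩) * ∏ d : DIdx n r, x d ^ b d.1 k)
        * (ι (add 1 (y ⟨k, l⟩)))⁻¹) ∧
    (∀ i : Fin n, i ≠ k → ∀ l : Fin (r i), res.1 ⟨i, l⟩ = x ⟨i, l⟩) := by
  obtain ⟨h1, h2⟩ := key add ι b k hb x y (List.finRange (r k)) (List.nodup_finRange _)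
    (x, y, enlarge r b) (fun l _ => rfl) (fun l _ e => rfl) (fun l _ e => rfl)
    (fun e _ => rfl) (fun l _ => rfl)
  refine ⟨fun l => h1 l (List.mem_finRange l), fun i hik l => ?_⟩
  exact h2 ⟨i, l⟩ (fun l' _ h => hik (congrArg Sigma.fst h))
end

section
/- Let r ≥ 1 and let s_1, …, s_r ∈ Q be such that e_l(s) := ⊕_{1 ≤ m_1 < ⋯ < m_l ≤ r} s_{m_1}⋯s_{m_l} lies in T for 1 ≤ l ≤ r and ψ₀(e_r(s)) = 1; set e_0(s) = 1. Then for every y ∈ S: the products ∏_{l=1}^{r}(1 ⊕ s_l y) and ∏_{l=1}^{r}(1 ⊕ s_l^{-1} y) belong to S, and in P ∪ {0} one has ψ(∏_{l=1}^{r}(1 ⊕ s_l y)) = Σ_{l=0}^{r} ψ₀(e_l(s)) · ψ(y)^l and ψ(∏_{l=1}^{r}(1 ⊕ s_l^{-1} y)) = Σ_{l=0}^{r} ψ₀(e_{r−l}(s)) · ψ(y)^l, where Σ denotes the addition of P ∪ {0} (⊕ extended by 0 ⊕ x = x ⊕ 0 = x) and ψ₀(e_0(s)) = 1. -/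
/-- The addition of `P ∪ {0}` (modelled as `Option P`, `none = 0`), extending `add` by
`0 ⊕ x = x ⊕ 0 = x`. -/
def addW {P : Type*} (add : P → P → P) : Option P → Option P → Option P
  | none, b => b
  | some a, none => some a
  | some a, some b => some (add a b)

/-- The multiplication of `P ∪ {0}`, with `0 · x = x · 0 = 0`. -/
def mulW {P : Type*} [Mul P] : Option P → Option P → Option P
  | none, _ => none
  | some _, none => none
  | some a, some b => some (a * b)

/-- The inversion of `P ∪ {0}` (on nonzero elements). -/
def invW {P : Type*} [Inv P] : Option P → Option P := Option.map (·⁻¹)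

/-- The `⊕`-sum of a list (a nonempty list is summed with `add`; the empty list gives `1`). -/
def listSum {Q : Type*} [One Q] (add : Q → Q → Q) : List Q → Q
  | [] => 1
  | a :: t => t.foldl add a

/-- The `l`-th elementary symmetric "polynomial" `e_l(s) = ⊕_{m₁<⋯<m_l} s_{m₁}⋯s_{m_l}`
of `s_1, …, s_r` with respect to the auxiliary addition `add` (with `e_0(s) = 1`). -/
noncomputable def elemSymW {Q : Type*} [CommGroup Q] (add : Q → Q → Q) {r : ℕ} (s : Fin r → Q) (l : ℕ) : Q :=
  listSum add
    (((Finset.powersetCard l (Finset.univ : Finset (Fin r))).toList).map fun A => ∏ m ∈ A, s m)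

/-- The `⊕`-sum, in `P ∪ {0}`, of a list of elements of `P ∪ {0}`. -/
def osum {P : Type*} (add : P → P → P) (L : List (Option P)) : Option P :=
  L.foldr (addW add) none


section OptCS
variable {M : Type*} [CommMonoid M] (add : M → M → M)

theorem addW_comm (hc : ∀ a b, add a b = add b a) (x y : Option M) :
    addW add x y = addW add y x := by
  cases x <;> cases y <;> simp [addW, hc]

theorem addW_assoc (ha : ∀ a b c, add (add a b) c = add a (add b c)) (x y z : Option M) :
    addW add (addW add x y) z = addW add x (addW add y z) := by
  cases x <;> cases y <;> cases z <;> simp [addW, ha]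

theorem mulW_addW (hd : ∀ p q₁ q₂, p * add q₁ q₂ = add (p * q₁) (p * q₂)) (x y z : Option M) :
    mulW x (addW add y z) = addW add (mulW x y) (mulW x z) := by
  cases x <;> cases y <;> cases z <;> simp [addW, mulW, hd]

theorem mulW_comm' (x y : Option M) : mulW x y = mulW y x := by
  cases x <;> cases y <;> simp [mulW, mul_comm]

theorem mulW_assoc' (x y z : Option M) : mulW (mulW x y) z = mulW x (mulW y z) := by
  cases x <;> cases y <;> cases z <;> simp [mulW, mul_assoc]

def optCS (hc : ∀ a b, add a b = add b a)
    (ha : ∀ a b c, add (add a b) c = add a (add b c))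
    (hd : ∀ p q₁ q₂, p * add q₁ q₂ = add (p * q₁) (p * q₂)) :
    CommSemiring (Option M) where
  add := addW add
  add_assoc := addW_assoc add ha
  zero := none
  zero_add x := by cases x <;> rfl
  add_zero x := by cases x <;> rfl
  nsmul n x := Nat.rec none (fun _ ih => addW add x ih) n
  nsmul_zero x := rfl
  nsmul_succ n x := addW_comm add hc x _
  add_comm := addW_comm add hc
  mul := mulW
  left_distrib := mulW_addW add hd
  right_distrib x y z := by
    show mulW (addW add x y) z = addW add (mulW x z) (mulW y z)
    rw [mulW_comm' (addW add x y) z, mulW_addW add hd, mulW_comm' z x, mulW_comm' z y]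
  zero_mul x := rfl
  mul_zero x := by cases x <;> rfl
  mul_assoc := mulW_assoc'
  one := some 1
  one_mul x := by cases x with
    | none => rfl
    | some v => show some (1 * v) = some v; rw [one_mul]
  mul_one x := by cases x with
    | none => rfl
    | some v => show some (v * 1) = some v; rw [mul_one]
  natCast n := Nat.rec none (fun _ ih => addW add ih (some 1)) n
  natCast_zero := rfl
  natCast_succ n := rfl
  npow n x := Nat.rec (some 1) (fun _ ih => mulW x ih) n
  npow_zero x := rfl
  npow_succ n x := mulW_comm' x _
  mul_comm := mulW_comm'

end OptCS

section ListLemmas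
variable {M : Type*} [CommMonoid M] (add : M → M → M)

theorem listSum_cons (ha : ∀ a b c, add (add a b) c = add a (add b c)) :
    ∀ (x : M) (t : List M), t ≠ [] → listSum add (x :: t) = add x (listSum add t) := by
  intro x t
  induction t generalizing x with
  | nil => intro h; exact absurd rfl h
  | cons h t' ih =>
    intro _
    cases t' with
    | nil => rfl
    | cons u v =>
      have e1 : listSum add (x :: h :: u :: v) = listSum add (add x h :: u :: v) := rfl
      rw [e1, ih (add x h) (by simp), ha, ← ih h (by simp)]

theorem map_some_sum [AddCommMonoid (Option M)]
    (hadd : ∀ x y : Option M, x + y = addW add x y) (h0 : (0 : Option M) = none)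
    (ha : ∀ a b c, add (add a b) c = add a (add b c)) :
    ∀ L : List M, L ≠ [] → (L.map some).sum = some (listSum add L) := by
  intro L
  induction L with
  | nil => intro h; exact absurd rfl h
  | cons x t ih =>
    intro _
    cases t with
    | nil => simp [hadd, h0, addW, listSum]
    | cons u v =>
      rw [List.map_cons, List.sum_cons, ih (by simp), hadd, listSum_cons add ha x _ (by simp)]
      rfl

theorem listSum_mul (ha : ∀ a b c, add (add a b) c = add a (add b c))
    (hd : ∀ p q₁ q₂, p * add q₁ q₂ = add (p * q₁) (p * q₂)) (c : M) :
    ∀ L : List M, L ≠ [] → listSum add L * c = listSum add (L.map (· * c)) := by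
  intro L
  induction L with
  | nil => intro h; exact absurd rfl h
  | cons x t ih =>
    intro _
    cases t with
    | nil => rfl
    | cons u v =>
      rw [listSum_cons add ha x _ (by simp), List.map_cons,
        listSum_cons add ha (x * c) _ (by simp), ← ih (by simp), mul_comm _ c, hd,
        mul_comm c x, mul_comm c _]

theorem listSum_mem (ha : ∀ a b c, add (add a b) c = add a (add b c))
    (T : Set M) (h1 : (1 : M) ∈ T) (hadd : ∀ a ∈ T, ∀ b ∈ T, add a b ∈ T) :
    ∀ L : List M, (∀ x ∈ L, x ∈ T) → listSum add L ∈ T := by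
  intro L
  induction L with
  | nil => intro _; exact h1
  | cons x t ih =>
    intro hmem
    cases t with
    | nil => exact hmem x (by simp)
    | cons u v =>
      rw [listSum_cons add ha x _ (by simp)]
      exact hadd x (hmem x (by simp)) _ (ih fun z hz => hmem z (by simp [hz]))

theorem osum_cons {P : Type*} (addP : P → P → P) (a : Option P) (L : List (Option P)) :
    osum addP (a :: L) = addW addP a (osum addP L) := rfl

theorem osum_ne_none {P : Type*} (addP : P → P → P) (p : P) :
    ∀ L : List (Option P), some p ∈ L → osum addP L ≠ none := by
  intro L
  induction L with
  | nil => intro h; simp at h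
  | cons a t ih =>
    intro hmem
    rw [osum_cons]
    rcases List.mem_cons.1 hmem with h | h
    · subst h; cases osum addP t <;> simp [addW]
    · have := ih h
      cases a <;> cases h' : osum addP t <;> simp_all [addW]

theorem mulW_osum {P : Type*} [CommMonoid P] (addP : P → P → P)
    (hd : ∀ p q₁ q₂, p * addP q₁ q₂ = addP (p * q₁) (p * q₂)) (c : Option P) :
    ∀ L : List (Option P), mulW c (osum addP L) = osum addP (L.map (mulW c)) := by
  intro L
  induction L with
  | nil => cases c <;> rfl
  | cons a t ih =>
    rw [List.map_cons, osum_cons, osum_cons, mulW_addW addP hd, ih]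

theorem psi0_listSum {P M : Type*} [CommMonoid M] (add : M → M → M)
    (ha : ∀ a b c, add (add a b) c = add a (add b c))
    (addP : P → P → P) (T : Set M) (h1 : (1 : M) ∈ T)
    (hadd : ∀ a ∈ T, ∀ b ∈ T, add a b ∈ T)
    (ψ₀ : M → Option P)
    (hψ₀ : ∀ a ∈ T, ∀ b ∈ T, ψ₀ (add a b) = addW addP (ψ₀ a) (ψ₀ b)) :
    ∀ L : List M, L ≠ [] → (∀ x ∈ L, x ∈ T) → ψ₀ (listSum add L) = osum addP (L.map ψ₀) := by
  intro L
  induction L with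
  | nil => intro h; exact absurd rfl h
  | cons x t ih =>
    intro _ hmem
    cases t with
    | nil => show ψ₀ x = addW addP (ψ₀ x) none; cases ψ₀ x <;> rfl
    | cons u v =>
      rw [listSum_cons add ha x _ (by simp), List.map_cons, osum_cons,
        ← ih (by simp) (fun z hz => hmem z (by simp [hz]))]
      exact hψ₀ x (hmem x (by simp)) _
        (listSum_mem add ha T h1 hadd _ (fun z hz => hmem z (by simp [hz])))

theorem sum_map_list_range {α : Type*} [AddCommMonoid α] (f : ℕ → α) (n : ℕ) :
    ((List.range n).map f).sum = ∑ j ∈ Finset.range n, f j := by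
  induction n with
  | zero => simp
  | succ m ih => rw [List.range_succ, Finset.sum_range_succ, List.map_append, List.sum_append, ih]; simp

end ListLemmas

section Key
variable {Q : Type*} [CommGroup Q] (addQ : Q → Q → Q)
  (hc : ∀ a b, addQ a b = addQ b a)
  (ha : ∀ a b c, addQ (addQ a b) c = addQ a (addQ b c))
  (hd : ∀ p q₁ q₂, p * addQ q₁ q₂ = addQ (p * q₁) (p * q₂))

theorem elemSymW_zero {r : ℕ} (s : Fin r → Q) : elemSymW addQ s 0 = 1 := by
  unfold elemSymW
  rw [Finset.powersetCard_zero, Finset.toList_singleton, List.map_cons, List.map_nil,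
    Finset.prod_empty]
  rfl

include hc ha hd in
theorem key1 {r : ℕ} (s : Fin r → Q) (y : Q) :
    (∏ l : Fin r, addQ 1 (s l * y))
      = listSum addQ ((List.range (r + 1)).map fun l => elemSymW addQ s l * y ^ l) := by
  letI : CommSemiring (Option Q) := optCS addQ hc ha hd
  have hadd : ∀ x y : Option Q, x + y = addW addQ x y := fun _ _ => rfl
  have h0 : (0 : Option Q) = none := rfl
  let φ : Q →* Option Q := { toFun := some, map_one' := rfl, map_mul' := fun _ _ => rfl }
  have fss : ∀ {ι : Type} (A : Finset ι) (f : ι → Q), A.Nonempty →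
      ∑ t ∈ A, (some (f t) : Option Q) = some (listSum addQ (A.toList.map f)) := by
    intro ι A f hA
    rw [← Finset.sum_map_toList,
      show List.map (fun t => (some (f t) : Option Q)) A.toList
        = List.map some (List.map f A.toList) from by rw [List.map_map]; rfl,
      map_some_sum addQ hadd h0 ha]
    simp only [ne_eq, List.map_eq_nil_iff, Finset.toList_eq_nil]
    exact hA.ne_empty
  apply Option.some_injective
  have cardu : (Finset.univ : Finset (Fin r)).card = r := by
    rw [Finset.card_univ, Fintype.card_fin]
  calc (some (∏ l : Fin r, addQ 1 (s l * y)) : Option Q)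
      = ∏ l : Fin r, (φ (s l) * φ y + 1) := by
        rw [show (some (∏ l : Fin r, addQ 1 (s l * y)) : Option Q)
            = φ (∏ l : Fin r, addQ 1 (s l * y)) from rfl, map_prod]
        refine Finset.prod_congr rfl fun l _ => ?_
        rw [add_comm]
        rfl
    _ = ∑ t ∈ (Finset.univ : Finset (Fin r)).powerset,
          (∏ i ∈ t, φ (s i) * φ y) * ∏ _i ∈ Finset.univ \ t, (1 : Option Q) :=
        Finset.prod_add _ _ _
    _ = ∑ t ∈ (Finset.univ : Finset (Fin r)).powerset, some ((∏ i ∈ t, s i) * y ^ t.card) := by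
        refine Finset.sum_congr rfl fun t _ => ?_
        rw [Finset.prod_const_one, mul_one, Finset.prod_mul_distrib, Finset.prod_const,
          ← map_prod, ← map_pow, ← map_mul]
        rfl
    _ = ∑ j ∈ Finset.range (r + 1),
          ∑ t ∈ Finset.powersetCard j (Finset.univ : Finset (Fin r)),
            some ((∏ i ∈ t, s i) * y ^ t.card) := by
        rw [Finset.sum_powerset, cardu]
    _ = ∑ j ∈ Finset.range (r + 1), some (elemSymW addQ s j * y ^ j) := by
        refine Finset.sum_congr rfl fun j hj => ?_
        have hjr : j ≤ r := by
          have := Finset.mem_range.1 hj; omega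
        have hne : (Finset.powersetCard j (Finset.univ : Finset (Fin r))).Nonempty :=
          Finset.powersetCard_nonempty.2 (by rw [cardu]; exact hjr)
        rw [Finset.sum_congr rfl fun t ht => by
          rw [(Finset.mem_powersetCard.1 ht).2]]
        rw [fss _ _ hne]
        congr 1
        rw [show ((Finset.powersetCard j (Finset.univ : Finset (Fin r))).toList.map
            fun t => (∏ i ∈ t, s i) * y ^ j)
            = ((Finset.powersetCard j (Finset.univ : Finset (Fin r))).toList.map
                fun t => ∏ i ∈ t, s i).map (· * y ^ j) from by rw [List.map_map]; rfl]
        rw [← listSum_mul addQ ha hd]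
        · rfl
        · simp only [ne_eq, List.map_eq_nil_iff, Finset.toList_eq_nil]
          exact hne.ne_empty
    _ = some (listSum addQ ((List.range (r + 1)).map fun l => elemSymW addQ s l * y ^ l)) := by
        rw [← sum_map_list_range (fun j => (some (elemSymW addQ s j * y ^ j) : Option Q)) (r + 1),
          show (List.range (r + 1)).map (fun j => (some (elemSymW addQ s j * y ^ j) : Option Q))
            = ((List.range (r + 1)).map fun l => elemSymW addQ s l * y ^ l).map some from by
              rw [List.map_map]; rfl,
          map_some_sum addQ hadd h0 ha]
        simp [List.range_eq_nil]

include hc ha hd in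
theorem key2 {r : ℕ} (s : Fin r → Q) {j : ℕ} (hj : j ≤ r) :
    elemSymW addQ (fun m => (s m)⁻¹) j
      = (elemSymW addQ s r)⁻¹ * elemSymW addQ s (r - j) := by
  letI : CommSemiring (Option Q) := optCS addQ hc ha hd
  have hadd : ∀ x y : Option Q, x + y = addW addQ x y := fun _ _ => rfl
  have h0 : (0 : Option Q) = none := rfl
  have fss : ∀ {ι : Type} (A : Finset ι) (f : ι → Q), A.Nonempty →
      ∑ t ∈ A, (some (f t) : Option Q) = some (listSum addQ (A.toList.map f)) := by
    intro ι A f hA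
    rw [← Finset.sum_map_toList,
      show List.map (fun t => (some (f t) : Option Q)) A.toList
        = List.map some (List.map f A.toList) from by rw [List.map_map]; rfl,
      map_some_sum addQ hadd h0 ha]
    simp only [ne_eq, List.map_eq_nil_iff, Finset.toList_eq_nil]
    exact hA.ne_empty
  have cardu : (Finset.univ : Finset (Fin r)).card = r := by
    rw [Finset.card_univ, Fintype.card_fin]
  have hps : Finset.powersetCard r (Finset.univ : Finset (Fin r)) = {Finset.univ} := by
    have h := Finset.powersetCard_self (Finset.univ : Finset (Fin r))
    rwa [cardu] at h
  have her_eq : elemSymW addQ s r = ∏ m, s m := by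
    unfold elemSymW
    rw [hps, Finset.toList_singleton, List.map_cons, List.map_nil]
    rfl
  have hne1 : (Finset.powersetCard j (Finset.univ : Finset (Fin r))).Nonempty :=
    Finset.powersetCard_nonempty.2 (by rw [cardu]; exact hj)
  have hne2 : (Finset.powersetCard (r - j) (Finset.univ : Finset (Fin r))).Nonempty :=
    Finset.powersetCard_nonempty.2 (by rw [cardu]; omega)
  apply Option.some_injective
  calc (some (elemSymW addQ (fun m => (s m)⁻¹) j) : Option Q)
      = ∑ A ∈ Finset.powersetCard j (Finset.univ : Finset (Fin r)),
          (some (∏ m ∈ A, (s m)⁻¹) : Option Q) := (fss _ _ hne1).symm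
    _ = ∑ B ∈ Finset.powersetCard (r - j) (Finset.univ : Finset (Fin r)),
          (some ((∏ m ∈ B, s m) * (∏ m, s m)⁻¹) : Option Q) := by
        refine Finset.sum_nbij' (fun A => Aᶜ) (fun B => Bᶜ) ?_ ?_ ?_ ?_ ?_
        · intro A hA
          rw [Finset.mem_powersetCard] at hA ⊢
          refine ⟨Finset.subset_univ _, ?_⟩
          rw [Finset.card_compl, Fintype.card_fin, hA.2]
        · intro B hB
          rw [Finset.mem_powersetCard] at hB ⊢
          refine ⟨Finset.subset_univ _, ?_⟩
          rw [Finset.card_compl, Fintype.card_fin, hB.2]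
          omega
        · intro A _; exact compl_compl A
        · intro B _; exact compl_compl B
        · intro A hA
          congr 1
          rw [Finset.prod_inv_distrib]
          rw [← Finset.prod_mul_prod_compl A s]
          group
    _ = some (elemSymW addQ s (r - j) * (∏ m, s m)⁻¹) := by
        rw [fss _ _ hne2]
        congr 1
        rw [show ((Finset.powersetCard (r - j) (Finset.univ : Finset (Fin r))).toList.map
            fun B => (∏ m ∈ B, s m) * (∏ m, s m)⁻¹)
            = ((Finset.powersetCard (r - j) (Finset.univ : Finset (Fin r))).toList.map
                fun B => ∏ m ∈ B, s m).map (· * (∏ m, s m)⁻¹) from by rw [List.map_map]; rfl,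
          ← listSum_mul addQ ha hd]
        · rfl
        · simp only [ne_eq, List.map_eq_nil_iff, Finset.toList_eq_nil]
          exact hne2.ne_empty
    _ = some ((elemSymW addQ s r)⁻¹ * elemSymW addQ s (r - j)) := by
        rw [her_eq, mul_comm]

end Key

section MainCore
variable {P Q : Type*} [CommGroup P] [CommGroup Q]

theorem pow_mem_T (T : Set Q) (hT1 : (1 : Q) ∈ T) (hTmul : ∀ a ∈ T, ∀ b ∈ T, a * b ∈ T)
    {a : Q} (haT : a ∈ T) (n : ℕ) : a ^ n ∈ T := by
  induction n with
  | zero => simpa using hT1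
  | succ m ih => rw [pow_succ]; exact hTmul _ ih _ haT

theorem psi0_pow (T : Set Q) (hT1 : (1 : Q) ∈ T) (hTmul : ∀ a ∈ T, ∀ b ∈ T, a * b ∈ T)
    (ψ₀ : Q → Option P)
    (hψ₀mul : ∀ a ∈ T, ∀ b ∈ T, ψ₀ (a * b) = mulW (ψ₀ a) (ψ₀ b))
    (hψ₀one : ψ₀ 1 = some 1)
    {a : Q} (haT : a ∈ T) {α : P} (hα : ψ₀ a = some α) (n : ℕ) :
    ψ₀ (a ^ n) = some (α ^ n) := by
  induction n with
  | zero => simpa using hψ₀one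
  | succ m ih =>
    rw [pow_succ, hψ₀mul _ (pow_mem_T T hT1 hTmul haT m) _ haT, ih, hα, pow_succ]
    rfl

theorem main_core
    (addP : P → P → P)
    (haddPd : ∀ p q₁ q₂, p * addP q₁ q₂ = addP (p * q₁) (p * q₂))
    (addQ : Q → Q → Q)
    (haddQa : ∀ a b c, addQ (addQ a b) c = addQ a (addQ b c))
    (T : Set Q) (hT1 : (1 : Q) ∈ T)
    (hTmul : ∀ a ∈ T, ∀ b ∈ T, a * b ∈ T)
    (hTadd : ∀ a ∈ T, ∀ b ∈ T, addQ a b ∈ T)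
    (ψ₀ : Q → Option P)
    (hψ₀mul : ∀ a ∈ T, ∀ b ∈ T, ψ₀ (a * b) = mulW (ψ₀ a) (ψ₀ b))
    (hψ₀add : ∀ a ∈ T, ∀ b ∈ T, ψ₀ (addQ a b) = addW addP (ψ₀ a) (ψ₀ b))
    (hψ₀one : ψ₀ 1 = some 1)
    (S : Set Q)
    (hS : S = {q : Q | ∃ a ∈ T, ∃ b ∈ T, ψ₀ a ≠ none ∧ ψ₀ b ≠ none ∧ q = a * b⁻¹})
    (ψ : Q → P)
    (hψ : ∀ a ∈ T, ∀ b ∈ T, ψ₀ a ≠ none → ψ₀ b ≠ none →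
      some (ψ (a * b⁻¹)) = mulW (ψ₀ a) (invW (ψ₀ b)))
    (r : ℕ) (E : ℕ → Q) (hE : ∀ l, l ≤ r → E l ∈ T) (hEr : ψ₀ (E r) ≠ none)
    (a b : Q) (haT : a ∈ T) (hbT : b ∈ T) (ha0 : ψ₀ a ≠ none) (hb0 : ψ₀ b ≠ none)
    (c : Q) (hcT : c ∈ T) (hc1 : ψ₀ c = some 1)
    (x : Q)
    (hx : x * (c * b ^ r)
      = listSum addQ ((List.range (r + 1)).map fun l => E l * a ^ l * b ^ (r - l))) :
    x ∈ S ∧ some (ψ x)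
      = osum addP ((List.range (r + 1)).map fun l =>
          mulW (ψ₀ (E l)) (some (ψ (a * b⁻¹) ^ l))) := by
  obtain ⟨α, hα⟩ := Option.ne_none_iff_exists'.1 ha0
  obtain ⟨β, hβ⟩ := Option.ne_none_iff_exists'.1 hb0
  obtain ⟨ε, hε⟩ := Option.ne_none_iff_exists'.1 hEr
  set f : ℕ → Q := fun l => E l * a ^ l * b ^ (r - l) with hf
  set N : Q := listSum addQ ((List.range (r + 1)).map f) with hN
  have hfT : ∀ l, l ≤ r → f l ∈ T := fun l hl =>
    hTmul _ (hTmul _ (hE l hl) _ (pow_mem_T T hT1 hTmul haT l)) _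
      (pow_mem_T T hT1 hTmul hbT (r - l))
  have hmemT : ∀ z ∈ (List.range (r + 1)).map f, z ∈ T := by
    intro z hz
    obtain ⟨l, hl, rfl⟩ := List.mem_map.1 hz
    exact hfT l (by have := List.mem_range.1 hl; omega)
  have hNT : N ∈ T := listSum_mem addQ haddQa T hT1 hTadd _ hmemT
  have hterm : ∀ l, l ≤ r → ψ₀ (f l) = mulW (ψ₀ (E l)) (some (α ^ l * β ^ (r - l))) := by
    intro l hl
    rw [hf]
    rw [hψ₀mul _ (hTmul _ (hE l hl) _ (pow_mem_T T hT1 hTmul haT l)) _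
        (pow_mem_T T hT1 hTmul hbT (r - l)),
      hψ₀mul _ (hE l hl) _ (pow_mem_T T hT1 hTmul haT l),
      psi0_pow T hT1 hTmul ψ₀ hψ₀mul hψ₀one haT hα,
      psi0_pow T hT1 hTmul ψ₀ hψ₀mul hψ₀one hbT hβ, mulW_assoc']
    rfl
  have hψN : ψ₀ N = osum addP (((List.range (r + 1)).map f).map ψ₀) :=
    psi0_listSum addQ haddQa addP T hT1 hTadd ψ₀ hψ₀add _ (by simp [List.range_eq_nil]) hmemT
  have hψN_ne : ψ₀ N ≠ none := by
    rw [hψN]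
    refine osum_ne_none addP (ε * (α ^ r * β ^ (r - r))) _ ?_
    refine List.mem_map.2 ⟨f r, List.mem_map.2 ⟨r, List.mem_range.2 (by omega), rfl⟩, ?_⟩
    rw [hterm r le_rfl, hε]
    rfl
  have hDT : c * b ^ r ∈ T := hTmul _ hcT _ (pow_mem_T T hT1 hTmul hbT r)
  have hψD : ψ₀ (c * b ^ r) = some (β ^ r) := by
    rw [hψ₀mul _ hcT _ (pow_mem_T T hT1 hTmul hbT r), hc1,
      psi0_pow T hT1 hTmul ψ₀ hψ₀mul hψ₀one hbT hβ]
    show some (1 * β ^ r) = some (β ^ r)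
    rw [one_mul]
  have hψD_ne : ψ₀ (c * b ^ r) ≠ none := by rw [hψD]; simp
  have hxeq : x = N * (c * b ^ r)⁻¹ := eq_mul_inv_of_mul_eq hx
  have hψy : ψ (a * b⁻¹) = α * β⁻¹ := by
    have h := hψ a haT b hbT ha0 hb0
    rw [hα, hβ] at h
    exact Option.some_injective _ h
  constructor
  · rw [hS]
    exact ⟨N, hNT, c * b ^ r, hDT, hψN_ne, hψD_ne, hxeq⟩
  · have h := hψ N hNT (c * b ^ r) hDT hψN_ne hψD_ne
    rw [← hxeq] at h
    rw [h, hψN, hψD]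
    rw [show invW (some (β ^ r)) = (some ((β ^ r)⁻¹) : Option P) from rfl,
      mulW_comm', mulW_osum addP haddPd, List.map_map, List.map_map]
    congr 1
    refine List.map_congr_left ?_
    intro l hl
    have hlr : l ≤ r := by have := List.mem_range.1 hl; omega
    show mulW (some ((β ^ r)⁻¹)) (ψ₀ (f l)) = mulW (ψ₀ (E l)) (some (ψ (a * b⁻¹) ^ l))
    rw [hterm l hlr, ← mulW_assoc', mulW_comm' (some ((β ^ r)⁻¹)) (ψ₀ (E l)), mulW_assoc']
    congr 1
    show some ((β ^ r)⁻¹ * (α ^ l * β ^ (r - l))) = some (ψ (a * b⁻¹) ^ l)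
    congr 1
    rw [hψy, mul_pow, inv_pow, ← pow_sub_mul_pow β hlr]
    exact (fun X Y Z => by rw [mul_inv, mul_comm Z X, mul_mul_mul_comm, inv_mul_cancel, one_mul, mul_comm] : ∀ X Y Z : P, (X * Y)⁻¹ * (Z * X) = Z * Y⁻¹) _ _ _

end MainCore

section Helpers
variable {G : Type*} [CommGroup G]

theorem grp1 (e A B C : G) : e * (A * B⁻¹) * (C * B) = e * A * C := by
  rw [mul_assoc e, mul_mul_mul_comm A B⁻¹ C B, inv_mul_cancel B, mul_one, ← mul_assoc]

theorem grp2 (E F A B C : G) : E⁻¹ * F * (A * B⁻¹) * (E * (C * B)) = F * A * C := by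
  rw [mul_mul_mul_comm (E⁻¹ * F) (A * B⁻¹) E (C * B),
    mul_mul_mul_comm A B⁻¹ C B, inv_mul_cancel B, mul_one,
    show E⁻¹ * F * E = F from by
      rw [mul_comm (E⁻¹) F, mul_assoc, inv_mul_cancel, mul_one],
    ← mul_assoc]

end Helpers

/-- If the elementary symmetric expressions `e_l(s)` (`1 ≤ l ≤ r`) lie in `T`
and `ψ₀(e_r(s)) = 1`, then for each `y ∈ S` the products `∏ (1 ⊕ s_l y)` and
`∏ (1 ⊕ s_l⁻¹ y)` lie in `S`, and their values under `ψ` are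
`Σ_{l=0}^{r} ψ₀(e_l(s)) ψ(y)^l` resp. `Σ_{l=0}^{r} ψ₀(e_{r−l}(s)) ψ(y)^l` in `P ∪ {0}`. -/
theorem factorization_in_S
    (P Q : Type*) [CommGroup P] [CommGroup Q]
    (addP : P → P → P)
    (haddPc : ∀ a b, addP a b = addP b a)
    (haddPa : ∀ a b c, addP (addP a b) c = addP a (addP b c))
    (haddPd : ∀ p q₁ q₂, p * addP q₁ q₂ = addP (p * q₁) (p * q₂))
    (addQ : Q → Q → Q)
    (haddQc : ∀ a b, addQ a b = addQ b a)
    (haddQa : ∀ a b c, addQ (addQ a b) c = addQ a (addQ b c))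
    (haddQd : ∀ p q₁ q₂, p * addQ q₁ q₂ = addQ (p * q₁) (p * q₂))
    (T : Set Q) (hT1 : (1 : Q) ∈ T)
    (hTmul : ∀ a ∈ T, ∀ b ∈ T, a * b ∈ T)
    (hTadd : ∀ a ∈ T, ∀ b ∈ T, addQ a b ∈ T)
    (ψ₀ : Q → Option P)
    (hψ₀mul : ∀ a ∈ T, ∀ b ∈ T, ψ₀ (a * b) = mulW (ψ₀ a) (ψ₀ b))
    (hψ₀add : ∀ a ∈ T, ∀ b ∈ T, ψ₀ (addQ a b) = addW addP (ψ₀ a) (ψ₀ b))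
    (hψ₀one : ψ₀ 1 = some 1)
    (S : Set Q)
    (hS : S = {q : Q | ∃ a ∈ T, ∃ b ∈ T, ψ₀ a ≠ none ∧ ψ₀ b ≠ none ∧ q = a * b⁻¹})
    (ψ : Q → P)
    (hψ : ∀ a ∈ T, ∀ b ∈ T, ψ₀ a ≠ none → ψ₀ b ≠ none →
      some (ψ (a * b⁻¹)) = mulW (ψ₀ a) (invW (ψ₀ b)))
    (r : ℕ) (hr : 1 ≤ r) (s : Fin r → Q)
    (he : ∀ l, 1 ≤ l → l ≤ r → elemSymW addQ s l ∈ T)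
    (her : ψ₀ (elemSymW addQ s r) = some 1)
    (y : Q) (hy : y ∈ S) :
    (∏ l : Fin r, addQ 1 (s l * y)) ∈ S ∧
    (∏ l : Fin r, addQ 1 ((s l)⁻¹ * y)) ∈ S ∧
    some (ψ (∏ l : Fin r, addQ 1 (s l * y)))
      = osum addP (((List.range (r + 1)).map fun l =>
          mulW (ψ₀ (elemSymW addQ s l)) (some (ψ y ^ l)))) ∧
    some (ψ (∏ l : Fin r, addQ 1 ((s l)⁻¹ * y)))
      = osum addP (((List.range (r + 1)).map fun l =>
          mulW (ψ₀ (elemSymW addQ s (r - l))) (some (ψ y ^ l)))) := by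
  rw [hS] at hy
  obtain ⟨a, haT, b, hbT, ha0, hb0, hyeq⟩ := hy
  subst hyeq
  have hE1 : ∀ l, l ≤ r → elemSymW addQ s l ∈ T := by
    intro l hl
    rcases Nat.eq_zero_or_pos l with h | h
    · rw [h, elemSymW_zero]; exact hT1
    · exact he l h hl
  have hEr1 : ψ₀ (elemSymW addQ s r) ≠ none := by rw [her]; simp
  have hrange : (List.range (r + 1)) ≠ [] := by simp [List.range_eq_nil]
  have hmapne : ∀ (g : ℕ → Q), (List.range (r + 1)).map g ≠ [] := by
    intro g; simp [List.range_eq_nil]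
  -- first product
  have hx1 : (∏ l : Fin r, addQ 1 (s l * (a * b⁻¹))) * (1 * b ^ r)
      = listSum addQ ((List.range (r + 1)).map fun l =>
          elemSymW addQ s l * a ^ l * b ^ (r - l)) := by
    rw [one_mul, key1 addQ haddQc haddQa haddQd s (a * b⁻¹),
      listSum_mul addQ haddQa haddQd (b ^ r) _ (hmapne _), List.map_map]
    congr 1
    refine List.map_congr_left ?_
    intro l hl
    have hlr : l ≤ r := by have := List.mem_range.1 hl; omega
    show elemSymW addQ s l * (a * b⁻¹) ^ l * b ^ r = _
    rw [mul_pow, inv_pow, ← pow_sub_mul_pow b hlr, grp1]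
  have H1 := main_core addP haddPd addQ haddQa T hT1 hTmul hTadd ψ₀ hψ₀mul hψ₀add hψ₀one
    S hS ψ hψ r (fun l => elemSymW addQ s l) hE1 hEr1 a b haT hbT ha0 hb0
    1 hT1 hψ₀one _ hx1
  -- second product
  have hE2 : ∀ l, l ≤ r → elemSymW addQ s (r - l) ∈ T := fun l _ => hE1 (r - l) (by omega)
  have hEr2 : ψ₀ (elemSymW addQ s (r - r)) ≠ none := by
    rw [Nat.sub_self, elemSymW_zero, hψ₀one]; simp
  have hx2 : (∏ l : Fin r, addQ 1 ((s l)⁻¹ * (a * b⁻¹))) * (elemSymW addQ s r * b ^ r)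
      = listSum addQ ((List.range (r + 1)).map fun l =>
          elemSymW addQ s (r - l) * a ^ l * b ^ (r - l)) := by
    rw [show (∏ l : Fin r, addQ 1 ((s l)⁻¹ * (a * b⁻¹)))
        = ∏ l : Fin r, addQ 1 ((fun m => (s m)⁻¹) l * (a * b⁻¹)) from rfl,
      key1 addQ haddQc haddQa haddQd (fun m => (s m)⁻¹) (a * b⁻¹),
      listSum_mul addQ haddQa haddQd (elemSymW addQ s r * b ^ r) _ (hmapne _), List.map_map]
    congr 1
    refine List.map_congr_left ?_
    intro l hl
    have hlr : l ≤ r := by have := List.mem_range.1 hl; omega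
    show elemSymW addQ (fun m => (s m)⁻¹) l * (a * b⁻¹) ^ l * (elemSymW addQ s r * b ^ r) = _
    rw [key2 addQ haddQc haddQa haddQd s hlr, mul_pow, inv_pow, ← pow_sub_mul_pow b hlr, grp2]
  have H2 := main_core addP haddPd addQ haddQa T hT1 hTmul hTadd ψ₀ hψ₀mul hψ₀add hψ₀one
    S hS ψ hψ r (fun l => elemSymW addQ s (r - l)) hE2 hEr2 a b haT hbT ha0 hb0
    (elemSymW addQ s r) (he r hr le_rfl) her _ hx2
  exact ⟨H1.1, H2.1, H1.2, H2.2⟩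
end

section
/- For every word w and every i ∈ {1,…,n}, the product ∏_{l=1}^{r_i} y^c(w)_{(i,l)} belongs to S and ψ(∏_{l=1}^{r_i} y^c(w)_{(i,l)}) = ψ(y^g(w)_i)^{r_i}; moreover ψ(y^g(w)_i) is the unique element p ∈ P with p^{r_i} = ψ(∏_{l=1}^{r_i} y^c(w)_{(i,l)}). -/
/-- Generalized matrix mutation `μ^r_k` of an `n × n` integer matrix. -/
def genMut {n : ℕ} (r : Fin n → ℕ) (B : Matrix (Fin n) (Fin n) ℤ) (k : Fin n) :
    Matrix (Fin n) (Fin n) ℤ :=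
  Matrix.of fun i j =>
    if i = k ∨ j = k then -B i j
    else B i j + (r k : ℤ) * (B i k * intPos (B k j) + intPos (-(B i k)) * B k j)

/-- The exchange polynomial value
`Z_k^ε(y) = 1 ⊕ (⊕_{l ∈ L} ẑ_l y^{l_ε}) ⊕ y^{rk}`, where `l_{+1} = l` and `l_{−1} = rk − l`
(the sign `ε` is modelled by a Boolean, `true = +1`). -/
def Zval {Q : Type*} [CommGroup Q] (add : Q → Q → Q) (L : Finset ℕ) (z : ℕ → Q) (rk : ℕ)
    (ε : Bool) (y : Q) : Q :=
  listSum add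
    (1 :: ((L.sort (· ≤ ·)).map fun l => z l * y ^ (if ε then l else rk - l)) ++ [y ^ rk])

/-- One step of the generalized `y`-pattern: the state is `(B(w), σ_{·;w}, y^g(w))`. -/
def ygStep {n : ℕ} (r : Fin n → ℕ) {Q : Type*} [CommGroup Q] (addQ : Q → Q → Q)
    (L : Fin n → Finset ℕ) (z : (k : Fin n) → ℕ → Q)
    (st : Matrix (Fin n) (Fin n) ℤ × (Fin n → Bool) × (Fin n → Q)) (k : Fin n) :
    Matrix (Fin n) (Fin n) ℤ × (Fin n → Bool) × (Fin n → Q) :=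
  (genMut r st.1 k,
   fun i => if i = k then !(st.2.1 k) else st.2.1 i,
   fun i =>
     if i = k then (st.2.2 k)⁻¹
     else st.2.2 i * ((st.2.2 k) ^ intPos (st.1 k i)) ^ (r k)
       * (Zval addQ (L k) (z k) (r k) (st.2.1 k) (st.2.2 k)) ^ (-(st.1 k i)))

/-- The generalized `y`-pattern attached to a word `w` (together with `B(w)` and the signs). -/
def ygPat {n : ℕ} (r : Fin n → ℕ) {Q : Type*} [CommGroup Q] (addQ : Q → Q → Q)
    (L : Fin n → Finset ℕ) (z : (k : Fin n) → ℕ → Q)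
    (B₀ : Matrix (Fin n) (Fin n) ℤ) (η : Fin n → Q) (w : List (Fin n)) :
    Matrix (Fin n) (Fin n) ℤ × (Fin n → Bool) × (Fin n → Q) :=
  w.foldl (ygStep r addQ L z) (B₀, fun _ => true, η)

/-- One step of the composite `y`-pattern: the state is `(B(w), y^c(w))`. -/
def ycStep {n : ℕ} (r : Fin n → ℕ) {Q : Type*} [CommGroup Q] (addQ : Q → Q → Q)
    (st : Matrix (Fin n) (Fin n) ℤ × ((i : Fin n) → Fin (r i) → Q)) (k : Fin n) :
    Matrix (Fin n) (Fin n) ℤ × ((i : Fin n) → Fin (r i) → Q) :=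
  (genMut r st.1 k,
   fun i =>
     if i = k then fun l => (st.2 i l)⁻¹
     else fun l => st.2 i l * (∏ m : Fin (r k), st.2 k m) ^ intPos (st.1 k i)
       * (∏ m : Fin (r k), addQ 1 (st.2 k m)) ^ (-(st.1 k i)))

/-- The composite `y`-pattern attached to a word `w` (together with `B(w)`). -/
def ycPat {n : ℕ} (r : Fin n → ℕ) {Q : Type*} [CommGroup Q] (addQ : Q → Q → Q)
    (B₀ : Matrix (Fin n) (Fin n) ℤ) (s : (i : Fin n) → Fin (r i) → Q) (η : Fin n → Q)
    (w : List (Fin n)) :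
    Matrix (Fin n) (Fin n) ℤ × ((i : Fin n) → Fin (r i) → Q) :=
  w.foldl (ycStep r addQ) (B₀, fun i l => s i l * η i)

/-- The sign `σ_{j;w} = (−1)^{number of occurrences of j in w}`. -/
def sigmaSign {n : ℕ} (w : List (Fin n)) (j : Fin n) : ℤ := (-1) ^ (w.count j)

/-! ### Auxiliary machinery: a commutative semiring structure on `Q ∪ {0}` -/

/-- Wrapper type for `Option Q`, used to carry a `CommSemiring` structure built from a
semifield-style addition on `Q`. -/
structure WSR (Q : Type*) where
  val : Option Q

namespace WSR

variable {Q : Type*}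

/-- Lift a binary operation on `Option Q` to `WSR Q`. -/
def lift2 (f : Option Q → Option Q → Option Q) : WSR Q → WSR Q → WSR Q :=
  fun a b => ⟨f a.val b.val⟩

/-- The inclusion `Q → WSR Q`. -/
def ι (q : Q) : WSR Q := ⟨some q⟩

theorem ι_inj : Function.Injective (ι (Q := Q)) := by
  intro a b h
  simpa [ι, WSR.mk.injEq] using h

section
variable [CommMonoid Q] (add : Q → Q → Q)

/-- Auxiliary `nsmul`. -/
def wnsmul : ℕ → WSR Q → WSR Q
  | 0, _ => ⟨none⟩
  | n + 1, x => lift2 (addW add) (wnsmul n x) x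

/-- Auxiliary `npow`. -/
def wnpow : ℕ → WSR Q → WSR Q
  | 0, _ => ⟨some 1⟩
  | n + 1, x => lift2 mulW (wnpow n x) x

theorem addW_assoc (ha : ∀ a b c, add (add a b) c = add a (add b c)) :
    ∀ x y z : Option Q, addW add (addW add x y) z = addW add x (addW add y z) := by
  intro x y z; cases x <;> cases y <;> cases z <;> simp [addW, ha]

theorem addW_comm (hc : ∀ a b, add a b = add b a) :
    ∀ x y : Option Q, addW add x y = addW add y x := by
  intro x y; cases x <;> cases y <;> simp [addW, hc]

theorem mulW_assoc : ∀ x y z : Option Q, mulW (mulW x y) z = mulW x (mulW y z) := by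
  intro x y z; cases x <;> cases y <;> cases z <;> simp [mulW, mul_assoc]

theorem mulW_comm : ∀ x y : Option Q, mulW x y = mulW y x := by
  intro x y; cases x <;> cases y <;> simp [mulW, mul_comm]

theorem mulW_one : ∀ x : Option Q, mulW x (some 1) = x := by
  intro x; cases x <;> simp [mulW]

theorem one_mulW : ∀ x : Option Q, mulW (some 1) x = x := by
  intro x; cases x <;> simp [mulW]

theorem ldistribW (hd : ∀ p q₁ q₂ : Q, p * add q₁ q₂ = add (p * q₁) (p * q₂)) :
    ∀ x y z : Option Q, mulW x (addW add y z) = addW add (mulW x y) (mulW x z) := by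
  intro x y z; cases x <;> cases y <;> cases z <;> simp [addW, mulW, hd]

theorem rdistribW (hd : ∀ p q₁ q₂ : Q, p * add q₁ q₂ = add (p * q₁) (p * q₂)) :
    ∀ x y z : Option Q, mulW (addW add x y) z = addW add (mulW x z) (mulW y z) := by
  have hd' : ∀ p q₁ q₂ : Q, add q₁ q₂ * p = add (q₁ * p) (q₂ * p) := fun p q₁ q₂ => by
    rw [mul_comm, hd, mul_comm p, mul_comm p]
  intro x y z; cases x <;> cases y <;> cases z <;> simp [addW, mulW, hd']

/-- The commutative semiring structure on `WSR Q` built from a semifield-style addition. -/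
def wsCS (hc : ∀ a b, add a b = add b a)
    (ha : ∀ a b c, add (add a b) c = add a (add b c))
    (hd : ∀ p q₁ q₂ : Q, p * add q₁ q₂ = add (p * q₁) (p * q₂)) :
    CommSemiring (WSR Q) :=
  { add := lift2 (addW add)
    add_assoc := fun a b c => congrArg WSR.mk (addW_assoc add ha a.val b.val c.val)
    zero := ⟨none⟩
    zero_add := fun a => congrArg WSR.mk (by cases a.val <;> rfl)
    add_zero := fun a => congrArg WSR.mk (by cases a.val <;> rfl)
    add_comm := fun a b => congrArg WSR.mk (addW_comm add hc a.val b.val)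
    nsmul := wnsmul add
    nsmul_zero := fun _ => rfl
    nsmul_succ := fun _ _ => rfl
    mul := lift2 mulW
    left_distrib := fun a b c => congrArg WSR.mk (ldistribW add hd a.val b.val c.val)
    right_distrib := fun a b c => congrArg WSR.mk (rdistribW add hd a.val b.val c.val)
    zero_mul := fun _ => rfl
    mul_zero := fun a => congrArg WSR.mk (by cases a.val <;> rfl)
    mul_assoc := fun a b c => congrArg WSR.mk (mulW_assoc a.val b.val c.val)
    one := ⟨some 1⟩
    one_mul := fun a => congrArg WSR.mk (one_mulW a.val)
    mul_one := fun a => congrArg WSR.mk (mulW_one a.val)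
    npow := wnpow
    npow_zero := fun _ => rfl
    npow_succ := fun _ _ => rfl
    mul_comm := fun a b => congrArg WSR.mk (mulW_comm a.val b.val) }

end
end WSR

section RHelpers

variable {Q : Type*} [CommGroup Q] {R : Type*} [CommSemiring R]
variable (addQ : Q → Q → Q) (ιM : Q →* R)

theorem listSum_cons_toR (hadd : ∀ a b, ιM (addQ a b) = ιM a + ιM b) :
    ∀ (t : List Q) (a : Q), ιM (listSum addQ (a :: t)) = ιM a + (t.map ιM).sum := by
  intro t
  induction t with
  | nil => simp [listSum]
  | cons b t ih =>
    intro a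
    have h1 : listSum addQ (a :: b :: t) = listSum addQ (addQ a b :: t) := rfl
    rw [h1, ih, hadd, List.map_cons, List.sum_cons, add_assoc]

theorem listSum_toR (hadd : ∀ a b, ιM (addQ a b) = ιM a + ιM b) (l : List Q) (hl : l ≠ []) :
    ιM (listSum addQ l) = (l.map ιM).sum := by
  cases l with
  | nil => exact absurd rfl hl
  | cons a t => rw [listSum_cons_toR addQ ιM hadd, List.map_cons, List.sum_cons]

theorem elemSym_toR (hadd : ∀ a b, ιM (addQ a b) = ιM a + ιM b) {r : ℕ} (u : Fin r → Q)
    (l : ℕ) (hl : l ≤ r) :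
    ιM (elemSymW addQ u l)
      = ∑ A ∈ Finset.powersetCard l (Finset.univ : Finset (Fin r)), ∏ m ∈ A, ιM (u m) := by
  have hne : (Finset.powersetCard l (Finset.univ : Finset (Fin r))).Nonempty :=
    Finset.powersetCard_nonempty.2 (by simpa using hl)
  rw [elemSymW, listSum_toR addQ ιM hadd _ (by
    simp only [ne_eq, List.map_eq_nil_iff, Finset.toList_eq_nil]
    exact hne.ne_empty), List.map_map, Finset.sum_map_toList]
  exact Finset.sum_congr rfl fun A _ => by simp [map_prod]

theorem prod_one_add_toR (hadd : ∀ a b, ιM (addQ a b) = ιM a + ιM b) {r : ℕ} (u : Fin r → Q)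
    (t : Q) :
    ιM (∏ m : Fin r, addQ 1 (u m * t))
      = ∑ l ∈ Finset.range (r + 1), ιM (elemSymW addQ u l) * ιM t ^ l := by
  have h1 : ιM (∏ m : Fin r, addQ 1 (u m * t)) = ∏ m : Fin r, (ιM (u m) * ιM t + 1) := by
    rw [map_prod]
    exact Finset.prod_congr rfl fun m _ => by rw [hadd, map_one, map_mul, add_comm]
  rw [h1, Finset.prod_add]
  have h2 : ∀ A ∈ (Finset.univ : Finset (Fin r)).powerset,
      (∏ m ∈ A, ιM (u m) * ιM t) * ∏ _m ∈ Finset.univ \ A, (1 : R)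
        = (∏ m ∈ A, ιM (u m)) * ιM t ^ A.card := by
    intro A _
    rw [Finset.prod_const_one, mul_one, Finset.prod_mul_distrib, Finset.prod_const]
  rw [Finset.sum_congr rfl h2, Finset.sum_powerset]
  rw [show (Finset.univ : Finset (Fin r)).card = r by simp]
  refine Finset.sum_congr rfl fun l hl => ?_
  rw [elemSym_toR addQ ιM hadd u l (by simpa using Nat.lt_succ_iff.mp (Finset.mem_range.mp hl)),
    Finset.sum_mul]
  refine Finset.sum_congr rfl fun A hA => ?_
  rw [Finset.mem_powersetCard_univ.mp hA]

theorem elemSym_inv (hadd : ∀ a b, ιM (addQ a b) = ιM a + ιM b)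
    (hinj : Function.Injective ιM) {r : ℕ} (u : Fin r → Q) (l : ℕ) (hl : l ≤ r) :
    elemSymW addQ (fun m => (u m)⁻¹) l = (∏ m : Fin r, u m)⁻¹ * elemSymW addQ u (r - l) := by
  apply hinj
  rw [map_mul, elemSym_toR addQ ιM hadd _ l hl, elemSym_toR addQ ιM hadd u (r - l) (Nat.sub_le r l),
    Finset.mul_sum]
  refine Finset.sum_bij' (fun A _ => Aᶜ) (fun B _ => Bᶜ) ?_ ?_ ?_ ?_ ?_
  · intro A hA
    rw [Finset.mem_powersetCard_univ, Finset.card_compl, Finset.mem_powersetCard_univ.mp hA,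
      Fintype.card_fin]
  · intro B hB
    rw [Finset.mem_powersetCard_univ, Finset.card_compl, Finset.mem_powersetCard_univ.mp hB,
      Fintype.card_fin]
    exact Nat.sub_sub_self hl
  · intro A _; exact compl_compl A
  · intro B _; exact compl_compl B
  · intro A hA
    have hsplit : (∏ m ∈ A, u m) * ∏ m ∈ Aᶜ, u m = ∏ m : Fin r, u m :=
      Finset.prod_mul_prod_compl A u
    have hq : ∏ m ∈ A, (u m)⁻¹ = (∏ m : Fin r, u m)⁻¹ * ∏ m ∈ Aᶜ, u m := by
      rw [← hsplit, mul_inv, mul_assoc, inv_mul_cancel, mul_one, Finset.prod_inv_distrib]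
    calc ∏ m ∈ A, ιM ((u m)⁻¹) = ιM (∏ m ∈ A, (u m)⁻¹) := by rw [map_prod]
      _ = ιM (∏ m : Fin r, u m)⁻¹ * ∏ m ∈ Aᶜ, ιM (u m) := by rw [hq, map_mul, map_prod]

theorem sum_ι_exists (hadd : ∀ a b, ιM (addQ a b) = ιM a + ιM b)
    {κ : Type*} (F : Finset κ) (hF : F.Nonempty) (f : κ → Q) :
    ∃ x, ∑ j ∈ F, ιM (f j) = ιM x := by
  induction hF using Finset.Nonempty.cons_induction with
  | singleton a => exact ⟨f a, by simp⟩
  | cons a F ha hF ih =>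
    obtain ⟨x, hx⟩ := ih
    exact ⟨addQ (f a) x, by rw [Finset.sum_cons, hx, hadd]⟩

theorem elemSym_top {r : ℕ} (u : Fin r → Q) : elemSymW addQ u r = ∏ m : Fin r, u m := by
  have h : Finset.powersetCard r (Finset.univ : Finset (Fin r)) = {Finset.univ} := by
    simpa using Finset.powersetCard_self (Finset.univ : Finset (Fin r))
  rw [elemSymW, h, Finset.toList_singleton, List.map_singleton]
  rfl

theorem elemSym_zero {r : ℕ} (u : Fin r → Q) : elemSymW addQ u 0 = 1 := by
  rw [elemSymW, Finset.powersetCard_zero, Finset.toList_singleton, List.map_singleton,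
    Finset.prod_empty]
  rfl

end RHelpers

theorem quot_aux {G : Type*} [CommGroup G] (a b c : G) : (b * c)⁻¹ * (a * c) = a * b⁻¹ := by
  rw [mul_inv]
  calc b⁻¹ * c⁻¹ * (a * c) = a * b⁻¹ * (c⁻¹ * c) := by ac_rfl
    _ = a * b⁻¹ := by rw [inv_mul_cancel, mul_one]

theorem pow_sub_aux {G : Type*} [CommGroup G] (a b : G) {l m : ℕ} (hl : l ≤ m) :
    (a * b⁻¹) ^ l * b ^ m = a ^ l * b ^ (m - l) := by
  have h : b ^ (m - l) * b ^ l = b ^ m := by rw [← pow_add, Nat.sub_add_cancel hl]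
  rw [← h, mul_pow, inv_pow]
  simp [mul_comm, mul_left_comm, mul_assoc]

theorem zpow_npow_comm {G : Type*} [CommGroup G] (x : G) (e : ℤ) (m : ℕ) :
    (x ^ m) ^ e = (x ^ e) ^ m := by
  calc (x ^ m) ^ e = (x ^ (m : ℤ)) ^ e := by rw [zpow_natCast]
    _ = x ^ ((m : ℤ) * e) := (zpow_mul x (m : ℤ) e).symm
    _ = x ^ (e * (m : ℤ)) := by rw [mul_comm]
    _ = (x ^ e) ^ (m : ℤ) := zpow_mul x e (m : ℤ)
    _ = (x ^ e) ^ m := zpow_natCast _ m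

theorem wsTorsionFree {M : Type*} [CommGroup M] (add : M → M → M)
    (hc : ∀ a b, add a b = add b a) (ha : ∀ a b c, add (add a b) c = add a (add b c))
    (hd : ∀ p q₁ q₂ : M, p * add q₁ q₂ = add (p * q₁) (p * q₂))
    {r : ℕ} (hr : 1 ≤ r) {p : M} (hp : p ^ r = 1) : p = 1 := by
  letI : CommSemiring (WSR M) := WSR.wsCS add hc ha hd
  let ιM : M →* WSR M := { toFun := WSR.ι, map_one' := rfl, map_mul' := fun _ _ => rfl }
  obtain ⟨m, rfl⟩ : ∃ m, r = m + 1 := ⟨r - 1, (Nat.succ_pred_eq_of_pos hr).symm⟩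
  have h1 : ιM p * ∑ j ∈ Finset.range (m + 1), ιM (p ^ j)
      = ∑ j ∈ Finset.range (m + 1), ιM (p ^ j) := by
    rw [Finset.mul_sum]
    have h2 : ∀ j ∈ Finset.range (m + 1), ιM p * ιM (p ^ j) = ιM (p ^ (j + 1)) := fun j _ => by
      rw [← map_mul, ← pow_succ']
    rw [Finset.sum_congr rfl h2, Finset.sum_range_succ, hp, ← pow_zero p]
    conv_rhs => rw [Finset.sum_range_succ']
  obtain ⟨x, hx⟩ := sum_ι_exists add ιM (fun _ _ => rfl) (Finset.range (m + 1))
    ⟨0, by simp⟩ (fun j => p ^ j)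
  rw [hx, ← map_mul] at h1
  have h3 : p * x = x := WSR.ι_inj h1
  exact mul_eq_right.mp h3

/-- The sign twist `s_{il}` or `s_{il}⁻¹` according to a boolean sign. -/
def vSgn {n : ℕ} {r : Fin n → ℕ} {Q : Type*} [CommGroup Q] (s : (i : Fin n) → Fin (r i) → Q)
    (i : Fin n) (b : Bool) (l : Fin (r i)) : Q :=
  cond b (s i l) (s i l)⁻¹

/-- For every word `w` and every `i`, `∏_l y^c(w)_{(i,l)} ∈ S`, its image
under `ψ` is `ψ(y^g(w)_i)^{r_i}`, and `ψ(y^g(w)_i)` is the unique `r_i`-th root of it. -/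
theorem block_product_of_composite_y_variables {n : ℕ} (hn : 1 ≤ n) (r : Fin n → ℕ) (hr : ∀ i, 1 ≤ r i)
    (P Q : Type*) [CommGroup P] [CommGroup Q]
    (addP : P → P → P)
    (haddPc : ∀ a b, addP a b = addP b a)
    (haddPa : ∀ a b c, addP (addP a b) c = addP a (addP b c))
    (haddPd : ∀ p q₁ q₂, p * addP q₁ q₂ = addP (p * q₁) (p * q₂))
    (addQ : Q → Q → Q)
    (haddQc : ∀ a b, addQ a b = addQ b a)
    (haddQa : ∀ a b c, addQ (addQ a b) c = addQ a (addQ b c))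
    (haddQd : ∀ p q₁ q₂, p * addQ q₁ q₂ = addQ (p * q₁) (p * q₂))
    (T : Set Q) (hT1 : (1 : Q) ∈ T)
    (hTmul : ∀ a ∈ T, ∀ b ∈ T, a * b ∈ T)
    (hTadd : ∀ a ∈ T, ∀ b ∈ T, addQ a b ∈ T)
    (ψ₀ : Q → Option P)
    (hψ₀mul : ∀ a ∈ T, ∀ b ∈ T, ψ₀ (a * b) = mulW (ψ₀ a) (ψ₀ b))
    (hψ₀add : ∀ a ∈ T, ∀ b ∈ T, ψ₀ (addQ a b) = addW addP (ψ₀ a) (ψ₀ b))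
    (hψ₀one : ψ₀ 1 = some 1)
    (S : Set Q)
    (hS : S = {q : Q | ∃ a ∈ T, ∃ b ∈ T, ψ₀ a ≠ none ∧ ψ₀ b ≠ none ∧ q = a * b⁻¹})
    (ψ : Q → P)
    (hψ : ∀ a ∈ T, ∀ b ∈ T, ψ₀ a ≠ none → ψ₀ b ≠ none →
      some (ψ (a * b⁻¹)) = mulW (ψ₀ a) (invW (ψ₀ b)))
    (B₀ : Matrix (Fin n) (Fin n) ℤ)
    (hskew : ∃ d : Fin n → ℚ, (∀ i, 0 < d i) ∧
      ∀ i j, d i * (B₀ i j : ℚ) = -(d j * (B₀ j i : ℚ)))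
    (s : (i : Fin n) → Fin (r i) → Q)
    (L : Fin n → Finset ℕ) (hL : ∀ k, ∀ l ∈ L k, 1 ≤ l ∧ l ≤ r k - 1)
    (z : (k : Fin n) → ℕ → Q)
    (hzT : ∀ k, ∀ l ∈ L k, z k l ∈ T) (hz0 : ∀ k, ∀ l ∈ L k, ψ₀ (z k l) ≠ none)
    (heT : ∀ i l, 1 ≤ l → l ≤ r i → elemSymW addQ (s i) l ∈ T)
    (hetop : ∀ i, ψ₀ (elemSymW addQ (s i) (r i)) = some 1)
    (hez : ∀ k, ∀ l ∈ L k, ψ₀ (elemSymW addQ (s k) l) = ψ₀ (z k l))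
    (hez' : ∀ k l, 1 ≤ l → l ≤ r k - 1 → l ∉ L k → ψ₀ (elemSymW addQ (s k) l) = none)
    (η : Fin n → Q) (hη : ∀ i, η i ∈ S)
    (w : List (Fin n)) (i : Fin n) :
    (∏ l : Fin (r i), (ycPat r addQ B₀ s η w).2 i l) ∈ S ∧
    ψ (∏ l : Fin (r i), (ycPat r addQ B₀ s η w).2 i l)
      = (ψ ((ygPat r addQ L z B₀ η w).2.2 i)) ^ (r i) ∧
    ∀ p : P, p ^ (r i) = ψ (∏ l : Fin (r i), (ycPat r addQ B₀ s η w).2 i l) →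
      p = ψ ((ygPat r addQ L z B₀ η w).2.2 i) := by
  
  classical
  letI instQ : CommSemiring (WSR Q) := WSR.wsCS addQ haddQc haddQa haddQd
  letI instP : CommSemiring (WSR P) := WSR.wsCS addP haddPc haddPa haddPd
  let ιQ : Q →* WSR Q := { toFun := WSR.ι, map_one' := rfl, map_mul' := fun _ _ => rfl }
  let ιP : P →* WSR P := { toFun := WSR.ι, map_one' := rfl, map_mul' := fun _ _ => rfl }
  have hinjQ : Function.Injective ιQ := fun a b h => WSR.ι_inj h
  have hinjP : Function.Injective ιP := fun a b h => WSR.ι_inj h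
  have hQadd : ∀ a b : Q, ιQ (addQ a b) = ιQ a + ιQ b := fun _ _ => rfl
  have hPadd : ∀ a b : P, ιP (addP a b) = ιP a + ιP b := fun _ _ => rfl
  let ψ' : Q → WSR P := fun q => ⟨ψ₀ q⟩
  have hψ'mul : ∀ a ∈ T, ∀ b ∈ T, ψ' (a * b) = ψ' a * ψ' b :=
    fun a ha b hb => congrArg WSR.mk (hψ₀mul a ha b hb)
  have hψ'add : ∀ a ∈ T, ∀ b ∈ T, ψ' (addQ a b) = ψ' a + ψ' b :=
    fun a ha b hb => congrArg WSR.mk (hψ₀add a ha b hb)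
  have hψ'one : ψ' 1 = 1 := congrArg WSR.mk hψ₀one
  have hψ'ι : ∀ (q : Q) (α : P), ψ₀ q = some α → ψ' q = ιP α :=
    fun q α h => congrArg WSR.mk h
  have hTpow : ∀ a ∈ T, ∀ m : ℕ, a ^ m ∈ T ∧ ψ' (a ^ m) = ψ' a ^ m := by
    intro a ha m
    induction m with
    | zero =>
      constructor
      · rw [pow_zero]; exact hT1
      · rw [pow_zero, pow_zero, hψ'one]
    | succ m ih =>
      constructor
      · rw [pow_succ]; exact hTmul _ ih.1 a ha
      · rw [pow_succ, hψ'mul _ ih.1 a ha, ih.2, pow_succ]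
  have hsumT : ∀ (F : Finset ℕ), F.Nonempty → ∀ f : ℕ → Q, (∀ j ∈ F, f j ∈ T) →
      ∃ N, N ∈ T ∧ (∑ j ∈ F, ιQ (f j)) = ιQ N ∧ ψ' N = ∑ j ∈ F, ψ' (f j) := by
    intro F hF
    induction hF using Finset.Nonempty.cons_induction with
    | singleton a =>
      intro f hf
      exact ⟨f a, hf a (Finset.mem_singleton_self a), by simp, by simp⟩
    | cons a F ha hF ih =>
      intro f hf
      obtain ⟨N, hNT, hsum, hψN⟩ := ih f (fun j hj => hf j (Finset.mem_cons_of_mem hj))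
      have hfa : f a ∈ T := hf a (Finset.mem_cons_self a F)
      refine ⟨addQ (f a) N, hTadd _ hfa _ hNT, ?_, ?_⟩
      · rw [Finset.sum_cons, hsum, hQadd]
      · rw [hψ'add _ hfa _ hNT, hψN, Finset.sum_cons]
  have hne0 : ∀ (x : WSR P) (γ : P), ιP γ + x ≠ 0 := by
    rintro ⟨_ | x⟩ γ h
    · exact Option.some_ne_none _ (congrArg WSR.val h)
    · exact Option.some_ne_none _ (congrArg WSR.val h)
  -- membership criterion for S
  have hmemS : ∀ a, a ∈ T → ∀ b, b ∈ T → ∀ α β, ψ₀ a = some α → ψ₀ b = some β →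
      a * b⁻¹ ∈ S ∧ ψ (a * b⁻¹) = α * β⁻¹ := by
    intro a ha b hb α β hα hβ
    have h1 : ψ₀ a ≠ none := by simp [hα]
    have h2 : ψ₀ b ≠ none := by simp [hβ]
    constructor
    · rw [hS]; exact ⟨a, ha, b, hb, h1, h2, rfl⟩
    · have h3 := hψ a ha b hb h1 h2
      rw [hα, hβ] at h3
      have h4 : mulW (some α) (invW (some β)) = some (α * β⁻¹) := rfl
      rw [h4] at h3
      exact Option.some_injective _ h3
  have hrepS : ∀ q ∈ S, ∃ a b α β, a ∈ T ∧ b ∈ T ∧ ψ₀ a = some α ∧ ψ₀ b = some β ∧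
      q = a * b⁻¹ ∧ ψ q = α * β⁻¹ := by
    intro q hq
    rw [hS] at hq
    obtain ⟨a, ha, b, hb, h1, h2, rfl⟩ := hq
    obtain ⟨α, hα⟩ := Option.ne_none_iff_exists'.mp h1
    obtain ⟨β, hβ⟩ := Option.ne_none_iff_exists'.mp h2
    exact ⟨a, b, α, β, ha, hb, hα, hβ, rfl, (hmemS a ha b hb α β hα hβ).2⟩
  have hTS : ∀ a ∈ T, ∀ α, ψ₀ a = some α → a ∈ S ∧ ψ a = α := by
    intro a ha α hα
    have h := hmemS a ha 1 hT1 α 1 hα hψ₀one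
    simp only [inv_one, mul_one] at h
    exact h
  have hSone : (1 : Q) ∈ S ∧ ψ 1 = 1 := hTS 1 hT1 1 hψ₀one
  have hSmul : ∀ q₁ ∈ S, ∀ q₂ ∈ S, q₁ * q₂ ∈ S ∧ ψ (q₁ * q₂) = ψ q₁ * ψ q₂ := by
    intro q₁ h₁ q₂ h₂
    obtain ⟨a₁, b₁, α₁, β₁, ha₁, hb₁, hα₁, hβ₁, hq₁, hψ₁⟩ := hrepS q₁ h₁
    obtain ⟨a₂, b₂, α₂, β₂, ha₂, hb₂, hα₂, hβ₂, hq₂, hψ₂⟩ := hrepS q₂ h₂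
    have hprod : q₁ * q₂ = (a₁ * a₂) * (b₁ * b₂)⁻¹ := by
      rw [hq₁, hq₂, mul_inv, mul_mul_mul_comm]
    have hψ₀a : ψ₀ (a₁ * a₂) = some (α₁ * α₂) := by
      have h := hψ₀mul a₁ ha₁ a₂ ha₂
      rw [hα₁, hα₂] at h
      exact h
    have hψ₀b : ψ₀ (b₁ * b₂) = some (β₁ * β₂) := by
      have h := hψ₀mul b₁ hb₁ b₂ hb₂
      rw [hβ₁, hβ₂] at h
      exact h
    have h := hmemS (a₁ * a₂) (hTmul _ ha₁ _ ha₂) (b₁ * b₂) (hTmul _ hb₁ _ hb₂) _ _ hψ₀a hψ₀b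
    rw [← hprod] at h
    refine ⟨h.1, ?_⟩
    rw [h.2, hψ₁, hψ₂, mul_inv, mul_mul_mul_comm]
  have hSinv : ∀ q ∈ S, q⁻¹ ∈ S ∧ ψ q⁻¹ = (ψ q)⁻¹ := by
    intro q hq
    obtain ⟨a, b, α, β, ha, hb, hα, hβ, hq', hψ'⟩ := hrepS q hq
    have hinv : q⁻¹ = b * a⁻¹ := by rw [hq', mul_inv, inv_inv, mul_comm]
    have h := hmemS b hb a ha β α hβ hα
    rw [← hinv] at h
    refine ⟨h.1, ?_⟩
    rw [h.2, hψ', mul_inv, inv_inv, mul_comm]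
  have hSpow : ∀ q ∈ S, ∀ m : ℕ, q ^ m ∈ S ∧ ψ (q ^ m) = ψ q ^ m := by
    intro q hq m
    induction m with
    | zero =>
      constructor
      · rw [pow_zero]; exact hSone.1
      · rw [pow_zero, pow_zero, hSone.2]
    | succ m ih =>
      constructor
      · rw [pow_succ]; exact (hSmul _ ih.1 _ hq).1
      · rw [pow_succ, (hSmul _ ih.1 _ hq).2, ih.2, pow_succ]
  have hSzpow : ∀ q ∈ S, ∀ e : ℤ, q ^ e ∈ S ∧ ψ (q ^ e) = ψ q ^ e := by
    intro q hq e
    cases e with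
    | ofNat m =>
      have h := hSpow q hq m
      constructor
      · rw [Int.ofNat_eq_coe, zpow_natCast]; exact h.1
      · rw [Int.ofNat_eq_coe, zpow_natCast, zpow_natCast]; exact h.2
    | negSucc m =>
      have h := hSpow q hq (m + 1)
      have h2 := hSinv _ h.1
      constructor
      · rw [zpow_negSucc]; exact h2.1
      · rw [zpow_negSucc, zpow_negSucc, h2.2, h.2]
  have hSadd : ∀ q₁ ∈ S, ∀ q₂ ∈ S, addQ q₁ q₂ ∈ S ∧ ψ (addQ q₁ q₂) = addP (ψ q₁) (ψ q₂) := by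
    intro q₁ h₁ q₂ h₂
    obtain ⟨a₁, b₁, α₁, β₁, ha₁, hb₁, hα₁, hβ₁, hq₁, hψ₁⟩ := hrepS q₁ h₁
    obtain ⟨a₂, b₂, α₂, β₂, ha₂, hb₂, hα₂, hβ₂, hq₂, hψ₂⟩ := hrepS q₂ h₂
    have e1 : (b₁ * b₂)⁻¹ * (a₁ * b₂) = a₁ * b₁⁻¹ := quot_aux a₁ b₁ b₂
    have e2 : (b₁ * b₂)⁻¹ * (a₂ * b₁) = a₂ * b₂⁻¹ := by
      rw [mul_comm b₁ b₂]; exact quot_aux a₂ b₂ b₁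
    have hqsum : addQ q₁ q₂ = addQ (a₁ * b₂) (a₂ * b₁) * (b₁ * b₂)⁻¹ := by
      rw [hq₁, hq₂, mul_comm (addQ (a₁ * b₂) (a₂ * b₁)) ((b₁ * b₂)⁻¹), haddQd, e1, e2]
    have hNT : addQ (a₁ * b₂) (a₂ * b₁) ∈ T :=
      hTadd _ (hTmul _ ha₁ _ hb₂) _ (hTmul _ ha₂ _ hb₁)
    have hψ₀N : ψ₀ (addQ (a₁ * b₂) (a₂ * b₁)) = some (addP (α₁ * β₂) (α₂ * β₁)) := by
      have hx : ψ₀ (a₁ * b₂) = some (α₁ * β₂) := by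
        have h := hψ₀mul a₁ ha₁ b₂ hb₂; rw [hα₁, hβ₂] at h; exact h
      have hy : ψ₀ (a₂ * b₁) = some (α₂ * β₁) := by
        have h := hψ₀mul a₂ ha₂ b₁ hb₁; rw [hα₂, hβ₁] at h; exact h
      have h := hψ₀add (a₁ * b₂) (hTmul _ ha₁ _ hb₂) (a₂ * b₁) (hTmul _ ha₂ _ hb₁)
      rw [hx, hy] at h
      exact h
    have hψ₀b : ψ₀ (b₁ * b₂) = some (β₁ * β₂) := by
      have h := hψ₀mul b₁ hb₁ b₂ hb₂; rw [hβ₁, hβ₂] at h; exact h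
    have h := hmemS _ hNT (b₁ * b₂) (hTmul _ hb₁ _ hb₂) _ _ hψ₀N hψ₀b
    rw [← hqsum] at h
    refine ⟨h.1, ?_⟩
    have e1P : (β₁ * β₂)⁻¹ * (α₁ * β₂) = α₁ * β₁⁻¹ := quot_aux α₁ β₁ β₂
    have e2P : (β₁ * β₂)⁻¹ * (α₂ * β₁) = α₂ * β₂⁻¹ := by
      rw [mul_comm β₁ β₂]; exact quot_aux α₂ β₂ β₁
    rw [h.2, hψ₁, hψ₂, mul_comm (addP (α₁ * β₂) (α₂ * β₁)) ((β₁ * β₂)⁻¹), haddPd, e1P, e2P]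
  have hSlist : ∀ (lst : List Q) (a : Q), a ∈ S → (∀ x ∈ lst, x ∈ S) →
      listSum addQ (a :: lst) ∈ S ∧
        ψ (listSum addQ (a :: lst)) = listSum addP ((a :: lst).map ψ) := by
    intro lst
    induction lst with
    | nil => intro a ha _; exact ⟨ha, rfl⟩
    | cons b lst ih =>
      intro a ha hmem
      have h1 : listSum addQ (a :: b :: lst) = listSum addQ (addQ a b :: lst) := rfl
      have hb : b ∈ S := hmem b (by simp)
      have hab := hSadd a ha b hb
      have h2 := ih (addQ a b) hab.1 (fun x hx => hmem x (by simp [hx]))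
      refine ⟨h1 ▸ h2.1, ?_⟩
      rw [h1, h2.2]
      show listSum addP (ψ (addQ a b) :: lst.map ψ) = listSum addP (ψ a :: ψ b :: lst.map ψ)
      rw [hab.2]
      rfl

  -- elementary symmetric values
  have heT' : ∀ (k : Fin n) (l : ℕ), l ≤ r k → elemSymW addQ (s k) l ∈ T := by
    intro k l hl
    cases l with
    | zero => rw [elemSym_zero]; exact hT1
    | succ m => exact heT k (m + 1) (Nat.succ_le_succ (Nat.zero_le m)) hl
  have hcf0 : ∀ k : Fin n, ψ' (elemSymW addQ (s k) 0) = 1 := by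
    intro k; rw [elemSym_zero]; exact hψ'one
  have hcftop : ∀ k : Fin n, ψ' (elemSymW addQ (s k) (r k)) = 1 :=
    fun k => (hψ'ι _ _ (hetop k)).trans (map_one ιP)
  have hcfL : ∀ (k : Fin n), ∀ l ∈ L k, ψ' (elemSymW addQ (s k) l) = ψ' (z k l) :=
    fun k l hl => congrArg WSR.mk (hez k l hl)
  have hcfnone : ∀ (k : Fin n) (l : ℕ), 1 ≤ l → l ≤ r k - 1 → l ∉ L k →
      ψ' (elemSymW addQ (s k) l) = 0 :=
    fun k l h1 h2 h3 => congrArg WSR.mk (hez' k l h1 h2 h3)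
  have hE : ∀ k : Fin n, (∏ m : Fin (r k), s k m) ∈ T ∧ ψ' (∏ m : Fin (r k), s k m) = 1 := by
    intro k
    rw [← elemSym_top addQ (s k)]
    exact ⟨heT' k (r k) le_rfl, (hψ'ι _ _ (hetop k)).trans (map_one ιP)⟩
  have hES : ∀ k : Fin n, (∏ m : Fin (r k), s k m) ∈ S ∧ ψ (∏ m : Fin (r k), s k m) = 1 := by
    intro k
    have h := hE k
    have hval : ψ₀ (∏ m : Fin (r k), s k m) = some 1 := congrArg WSR.val h.2
    exact hTS _ h.1 _ hval
  have hzS : ∀ (k : Fin n), ∀ l ∈ L k, z k l ∈ S ∧ ψ' (z k l) = ιP (ψ (z k l)) := by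
    intro k l hl
    obtain ⟨ζ, hζ⟩ := Option.ne_none_iff_exists'.mp (hz0 k l hl)
    have h := hTS _ (hzT k l hl) _ hζ
    exact ⟨h.1, by rw [hψ'ι _ _ hζ, h.2]⟩
  -- block products of the numerators
  have hP1 : ∀ (k : Fin n) (ε : Bool) (tk : Q), tk ∈ S →
      (∏ m : Fin (r k), vSgn s k ε m * tk) ∈ S ∧
        ψ (∏ m : Fin (r k), vSgn s k ε m * tk) = ψ tk ^ (r k) := by
    intro k ε tk htk
    have hsplit : (∏ m : Fin (r k), vSgn s k ε m * tk)
        = (∏ m : Fin (r k), vSgn s k ε m) * tk ^ (r k) := by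
      rw [Finset.prod_mul_distrib, Finset.prod_const, Finset.card_univ, Fintype.card_fin]
    have hv : (∏ m : Fin (r k), vSgn s k ε m) ∈ S ∧ ψ (∏ m : Fin (r k), vSgn s k ε m) = 1 := by
      cases ε with
      | false =>
        have h : (∏ m : Fin (r k), vSgn s k false m) = (∏ m : Fin (r k), s k m)⁻¹ := by
          rw [← Finset.prod_inv_distrib]; rfl
        rw [h]
        have h2 := hSinv _ (hES k).1
        rw [(hES k).2, inv_one] at h2
        exact h2
      | true => exact hES k
    rw [hsplit]
    have h := hSmul _ hv.1 _ (hSpow tk htk (r k)).1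
    rw [hv.2, one_mul, (hSpow tk htk (r k)).2] at h
    exact h
  -- the canonical sum computation
  have hmidC : ∀ (k : Fin n) (g : ℕ → WSR P),
      (∑ j ∈ Finset.range (r k - 1), if (j + 1) ∈ L k then g (j + 1) else 0)
        = ∑ l ∈ L k, g l := by
    intro k g
    have h1 : ∑ l ∈ Finset.Ico 1 (r k), (if l ∈ L k then g l else 0)
        = ∑ j ∈ Finset.range (r k - 1), (if (j + 1) ∈ L k then g (j + 1) else 0) := by
      rw [Finset.sum_Ico_eq_sum_range]
      exact Finset.sum_congr rfl fun j _ => by rw [Nat.add_comm 1 j]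
    rw [← h1, Finset.sum_ite_mem]
    congr 1
    rw [Finset.inter_eq_right]
    intro l hl
    have h2 := hL k l hl
    rw [Finset.mem_Ico]
    exact ⟨h2.1, lt_of_le_of_lt h2.2 (Nat.sub_lt (hr k) one_pos)⟩
  have hCt : ∀ (k : Fin n) (y : P),
      ∑ l ∈ Finset.range (r k + 1), ψ' (elemSymW addQ (s k) l) * ιP (y ^ l)
        = 1 + ((∑ l ∈ L k, ψ' (z k l) * ιP (y ^ l)) + ιP (y ^ (r k))) := by
    intro k y
    rw [Finset.sum_range_succ, hcftop k, one_mul]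
    have hm : r k - 1 + 1 = r k := Nat.succ_pred_eq_of_pos (hr k)
    have hsucc := Finset.sum_range_succ'
      (fun l => ψ' (elemSymW addQ (s k) l) * ιP (y ^ l)) (r k - 1)
    rw [hm] at hsucc
    rw [hsucc, hcf0 k, one_mul, pow_zero, map_one]
    have hmid : ∀ j ∈ Finset.range (r k - 1),
        ψ' (elemSymW addQ (s k) (j + 1)) * ιP (y ^ (j + 1))
          = (if (j + 1) ∈ L k then ψ' (z k (j + 1)) * ιP (y ^ (j + 1)) else 0) := by
      intro j hj
      by_cases hjL : (j + 1) ∈ L k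
      · rw [if_pos hjL, hcfL k _ hjL]
      · have hle : (j + 1) ≤ r k - 1 := by
          have := Finset.mem_range.mp hj; omega
        rw [if_neg hjL, hcfnone k (j + 1) (Nat.succ_le_succ (Nat.zero_le j)) hle hjL, zero_mul]
    rw [Finset.sum_congr rfl hmid, hmidC k (fun l => ψ' (z k l) * ιP (y ^ l))]
    ring
  have hCf : ∀ (k : Fin n) (y : P),
      ∑ l ∈ Finset.range (r k + 1), ψ' (elemSymW addQ (s k) l) * ιP (y ^ (r k - l))
        = 1 + ((∑ l ∈ L k, ψ' (z k l) * ιP (y ^ (r k - l))) + ιP (y ^ (r k))) := by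
    intro k y
    rw [Finset.sum_range_succ, hcftop k, one_mul, Nat.sub_self, pow_zero, map_one]
    have hm : r k - 1 + 1 = r k := Nat.succ_pred_eq_of_pos (hr k)
    have hsucc := Finset.sum_range_succ'
      (fun l => ψ' (elemSymW addQ (s k) l) * ιP (y ^ (r k - l))) (r k - 1)
    rw [hm] at hsucc
    rw [hsucc, hcf0 k, one_mul, Nat.sub_zero]
    have hmid : ∀ j ∈ Finset.range (r k - 1),
        ψ' (elemSymW addQ (s k) (j + 1)) * ιP (y ^ (r k - (j + 1)))
          = (if (j + 1) ∈ L k then ψ' (z k (j + 1)) * ιP (y ^ (r k - (j + 1))) else 0) := by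
      intro j hj
      by_cases hjL : (j + 1) ∈ L k
      · rw [if_pos hjL, hcfL k _ hjL]
      · have hle : (j + 1) ≤ r k - 1 := by
          have := Finset.mem_range.mp hj; omega
        rw [if_neg hjL, hcfnone k (j + 1) (Nat.succ_le_succ (Nat.zero_le j)) hle hjL, zero_mul]
    rw [Finset.sum_congr rfl hmid, hmidC k (fun l => ψ' (z k l) * ιP (y ^ (r k - l)))]
    ring

  -- the key computation: the exchange-factor products
  have hKey : ∀ (k : Fin n) (ε : Bool) (tk gk : Q), tk ∈ S → gk ∈ S → ψ tk = ψ gk →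
      Zval addQ (L k) (z k) (r k) ε gk ∈ S ∧
      (∏ m : Fin (r k), addQ 1 (vSgn s k ε m * tk)) ∈ S ∧
      ψ (∏ m : Fin (r k), addQ 1 (vSgn s k ε m * tk))
        = ψ (Zval addQ (L k) (z k) (r k) ε gk) := by
    intro k ε tk gk htk hgk hψeq
    obtain ⟨a, b, α, β, haT, hbT, hα, hβ, hq, hψtk⟩ := hrepS tk htk
    -- the Z-side
    have hterms : ∀ x ∈ (((L k).sort (· ≤ ·)).map fun l =>
        z k l * gk ^ (if ε then l else r k - l)) ++ [gk ^ (r k)], x ∈ S := by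
      intro x hx
      rcases List.mem_append.mp hx with hx | hx
      · obtain ⟨l, hl, rfl⟩ := List.mem_map.mp hx
        have hlL : l ∈ L k := (Finset.mem_sort _).mp hl
        exact (hSmul _ (hzS k l hlL).1 _ (hSpow gk hgk _).1).1
      · rw [List.mem_singleton.mp hx]
        exact (hSpow gk hgk _).1
    have hZdef : Zval addQ (L k) (z k) (r k) ε gk
        = listSum addQ (1 :: ((((L k).sort (· ≤ ·)).map fun l =>
            z k l * gk ^ (if ε then l else r k - l)) ++ [gk ^ (r k)])) := rfl
    have hZ := hSlist _ 1 hSone.1 hterms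
    rw [← hZdef] at hZ
    have hsortsum : ∀ (g : ℕ → WSR P), ((((L k).sort (· ≤ ·)).map g)).sum = ∑ l ∈ L k, g l := by
      intro g
      rw [← Finset.sum_map_toList]
      exact List.Perm.sum_eq (List.Perm.map g (Finset.sort_perm_toList (L k) (· ≤ ·)))
    have hZval : ιP (ψ (Zval addQ (L k) (z k) (r k) ε gk))
        = 1 + ((∑ l ∈ L k, ψ' (z k l) * ιP (ψ gk ^ (if ε then l else r k - l)))
            + ιP (ψ gk ^ (r k))) := by
      rw [hZ.2, listSum_toR addP ιP hPadd _ (by simp)]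
      simp only [List.map_cons, List.map_append, List.map_singleton, List.map_map,
        List.sum_cons, List.sum_append, List.sum_singleton, List.map_nil, List.sum_nil,
        add_zero]
      rw [hSone.2, map_one]
      congr 2
      · rw [hsortsum ((fun x => ιP x) ∘ ψ ∘ fun l => z k l * gk ^ (if ε then l else r k - l))]
        refine Finset.sum_congr rfl fun l hlL => ?_
        show ιP (ψ (z k l * gk ^ (if ε then l else r k - l))) = _
        rw [(hSmul _ (hzS k l hlL).1 _ (hSpow gk hgk _).1).2, map_mul,
          (hSpow gk hgk _).2, ← (hzS k l hlL).2]
      · rw [(hSpow gk hgk (r k)).2]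
    -- the composite-side product
    have hP2 : (∏ m : Fin (r k), addQ 1 (vSgn s k ε m * tk)) ∈ S ∧
        ιP (ψ (∏ m : Fin (r k), addQ 1 (vSgn s k ε m * tk)))
          = 1 + ((∑ l ∈ L k, ψ' (z k l) * ιP (ψ tk ^ (if ε then l else r k - l)))
              + ιP (ψ tk ^ (r k))) := by
      cases ε with
      | true =>
        have h1 : ιQ ((∏ m : Fin (r k), addQ 1 (s k m * tk)) * b ^ (r k))
            = ∑ l ∈ Finset.range (r k + 1),
                ιQ (elemSymW addQ (s k) l * (a ^ l * b ^ (r k - l))) := by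
          rw [map_mul, prod_one_add_toR addQ ιQ hQadd (s k) tk, Finset.sum_mul]
          refine Finset.sum_congr rfl fun l hl => ?_
          have hlle : l ≤ r k := Nat.lt_succ_iff.mp (Finset.mem_range.mp hl)
          rw [← map_pow, ← map_mul, ← map_mul]
          congr 1
          rw [hq, mul_assoc]
          congr 1
          exact pow_sub_aux a b hlle
        have hTl : ∀ l ∈ Finset.range (r k + 1),
            elemSymW addQ (s k) l * (a ^ l * b ^ (r k - l)) ∈ T := by
          intro l hl
          exact hTmul _ (heT' k l (Nat.lt_succ_iff.mp (Finset.mem_range.mp hl))) _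
            (hTmul _ (hTpow a haT l).1 _ (hTpow b hbT _).1)
        obtain ⟨N, hNT, hNsum, hNψ⟩ := hsumT (Finset.range (r k + 1)) ⟨0, by simp⟩ _ hTl
        have hPN : (∏ m : Fin (r k), addQ 1 (s k m * tk)) * b ^ (r k) = N :=
          hinjQ (h1.trans hNsum)
        have hψN : ψ' N = ∑ l ∈ Finset.range (r k + 1),
            ψ' (elemSymW addQ (s k) l) * ιP (α ^ l * β ^ (r k - l)) := by
          rw [hNψ]
          refine Finset.sum_congr rfl fun l hl => ?_
          rw [hψ'mul _ (heT' k l (Nat.lt_succ_iff.mp (Finset.mem_range.mp hl))) _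
            (hTmul _ (hTpow a haT l).1 _ (hTpow b hbT _).1)]
          congr 1
          rw [hψ'mul _ (hTpow a haT l).1 _ (hTpow b hbT _).1,
            (hTpow a haT l).2, (hTpow b hbT _).2, hψ'ι a α hα, hψ'ι b β hβ,
            ← map_pow, ← map_pow, ← map_mul]
        have hN0 : ψ' N ≠ 0 := by
          rw [hψN, ← Finset.add_sum_erase _ _ (Finset.mem_range.mpr (Nat.succ_pos (r k))),
            hcf0 k, one_mul]
          exact hne0 _ _
        have hψ₀N : ψ₀ N ≠ none := fun h => hN0 (congrArg WSR.mk h)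
        obtain ⟨γ, hγ⟩ := Option.ne_none_iff_exists'.mp hψ₀N
        have hψ₀bp : ψ₀ (b ^ (r k)) = some (β ^ (r k)) :=
          congrArg WSR.val ((hTpow b hbT (r k)).2.trans
            (by rw [hψ'ι b β hβ, ← map_pow]; rfl))
        have hP2eq : (∏ m : Fin (r k), addQ 1 (s k m * tk)) = N * (b ^ (r k))⁻¹ :=
          eq_mul_inv_iff_mul_eq.mpr hPN
        have hmem := hmemS N hNT (b ^ (r k)) (hTpow b hbT (r k)).1 γ (β ^ (r k)) hγ hψ₀bp
        rw [← hP2eq] at hmem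
        refine ⟨hmem.1, ?_⟩
        have hig : ιP γ = ψ' N := (hψ'ι N γ hγ).symm
        show ιP (ψ (∏ m : Fin (r k), addQ 1 (s k m * tk))) = _
        rw [hmem.2, map_mul, hig, hψN, Finset.sum_mul]
        have hstep : ∀ l ∈ Finset.range (r k + 1),
            ψ' (elemSymW addQ (s k) l) * ιP (α ^ l * β ^ (r k - l)) * ιP ((β ^ (r k))⁻¹)
              = ψ' (elemSymW addQ (s k) l) * ιP (ψ tk ^ l) := by
          intro l hl
          have hlle : l ≤ r k := Nat.lt_succ_iff.mp (Finset.mem_range.mp hl)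
          rw [mul_assoc, ← map_mul]
          congr 2
          rw [hψtk, ← pow_sub_aux α β hlle, mul_inv_cancel_right]
        rw [Finset.sum_congr rfl hstep, hCt k (ψ tk)]
        rfl
      | false =>
        have h1 : ιQ ((∏ m : Fin (r k), addQ 1 ((s k m)⁻¹ * tk))
              * ((∏ m : Fin (r k), s k m) * b ^ (r k)))
            = ∑ l ∈ Finset.range (r k + 1),
                ιQ (elemSymW addQ (s k) (r k - l) * (a ^ l * b ^ (r k - l))) := by
          rw [map_mul, prod_one_add_toR addQ ιQ hQadd (fun m => (s k m)⁻¹) tk, Finset.sum_mul]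
          refine Finset.sum_congr rfl fun l hl => ?_
          have hlle : l ≤ r k := Nat.lt_succ_iff.mp (Finset.mem_range.mp hl)
          rw [elemSym_inv addQ ιQ hQadd hinjQ (s k) l hlle]
          rw [← map_pow, ← map_mul, ← map_mul]
          congr 1
          rw [hq, ← pow_sub_aux a b hlle]
          calc (∏ m : Fin (r k), s k m)⁻¹ * elemSymW addQ (s k) (r k - l) * (a * b⁻¹) ^ l
                * ((∏ m : Fin (r k), s k m) * b ^ (r k))
              = elemSymW addQ (s k) (r k - l) * ((a * b⁻¹) ^ l * b ^ (r k))
                * ((∏ m : Fin (r k), s k m)⁻¹ * (∏ m : Fin (r k), s k m)) := by ac_rfl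
            _ = elemSymW addQ (s k) (r k - l) * ((a * b⁻¹) ^ l * b ^ (r k)) := by
                rw [inv_mul_cancel, mul_one]
        have hTl : ∀ l ∈ Finset.range (r k + 1),
            elemSymW addQ (s k) (r k - l) * (a ^ l * b ^ (r k - l)) ∈ T := by
          intro l hl
          exact hTmul _ (heT' k (r k - l) (Nat.sub_le _ _)) _
            (hTmul _ (hTpow a haT l).1 _ (hTpow b hbT _).1)
        obtain ⟨N, hNT, hNsum, hNψ⟩ := hsumT (Finset.range (r k + 1)) ⟨0, by simp⟩ _ hTl
        have hPN : (∏ m : Fin (r k), addQ 1 ((s k m)⁻¹ * tk))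
            * ((∏ m : Fin (r k), s k m) * b ^ (r k)) = N :=
          hinjQ (h1.trans hNsum)
        have hψN : ψ' N = ∑ l ∈ Finset.range (r k + 1),
            ψ' (elemSymW addQ (s k) (r k - l)) * ιP (α ^ l * β ^ (r k - l)) := by
          rw [hNψ]
          refine Finset.sum_congr rfl fun l hl => ?_
          rw [hψ'mul _ (heT' k (r k - l) (Nat.sub_le _ _)) _
            (hTmul _ (hTpow a haT l).1 _ (hTpow b hbT _).1)]
          congr 1
          rw [hψ'mul _ (hTpow a haT l).1 _ (hTpow b hbT _).1,
            (hTpow a haT l).2, (hTpow b hbT _).2, hψ'ι a α hα, hψ'ι b β hβ,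
            ← map_pow, ← map_pow, ← map_mul]
        have hN0 : ψ' N ≠ 0 := by
          rw [hψN, ← Finset.add_sum_erase _ _ (Finset.mem_range.mpr (Nat.succ_pos (r k))),
            Nat.sub_zero, hcftop k, one_mul]
          exact hne0 _ _
        have hψ₀N : ψ₀ N ≠ none := fun h => hN0 (congrArg WSR.mk h)
        obtain ⟨γ, hγ⟩ := Option.ne_none_iff_exists'.mp hψ₀N
        have hDT : (∏ m : Fin (r k), s k m) * b ^ (r k) ∈ T :=
          hTmul _ (hE k).1 _ (hTpow b hbT (r k)).1
        have hψ₀D : ψ₀ ((∏ m : Fin (r k), s k m) * b ^ (r k)) = some (β ^ (r k)) := by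
          refine congrArg WSR.val (?_ : ψ' _ = ιP (β ^ (r k)))
          rw [hψ'mul _ (hE k).1 _ (hTpow b hbT (r k)).1, (hE k).2, one_mul,
            (hTpow b hbT (r k)).2, hψ'ι b β hβ, ← map_pow]
        have hP2eq : (∏ m : Fin (r k), addQ 1 ((s k m)⁻¹ * tk))
            = N * ((∏ m : Fin (r k), s k m) * b ^ (r k))⁻¹ :=
          eq_mul_inv_iff_mul_eq.mpr hPN
        have hmem := hmemS N hNT _ hDT γ (β ^ (r k)) hγ hψ₀D
        rw [← hP2eq] at hmem
        refine ⟨hmem.1, ?_⟩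
        have hig : ιP γ = ψ' N := (hψ'ι N γ hγ).symm
        show ιP (ψ (∏ m : Fin (r k), addQ 1 ((s k m)⁻¹ * tk))) = _
        rw [hmem.2, map_mul, hig, hψN, Finset.sum_mul]
        have hstep : ∀ l ∈ Finset.range (r k + 1),
            ψ' (elemSymW addQ (s k) (r k - l)) * ιP (α ^ l * β ^ (r k - l)) * ιP ((β ^ (r k))⁻¹)
              = (fun l => ψ' (elemSymW addQ (s k) l) * ιP (ψ tk ^ (r k - l))) (r k + 1 - 1 - l) := by
          intro l hl
          have hlle : l ≤ r k := Nat.lt_succ_iff.mp (Finset.mem_range.mp hl)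
          show _ = ψ' (elemSymW addQ (s k) (r k + 1 - 1 - l)) * ιP (ψ tk ^ (r k - (r k + 1 - 1 - l)))
          have e1 : r k + 1 - 1 - l = r k - l := by omega
          have e2 : r k - (r k - l) = l := Nat.sub_sub_self hlle
          rw [e1, e2, mul_assoc, ← map_mul]
          congr 2
          rw [hψtk, ← pow_sub_aux α β hlle, mul_inv_cancel_right]
        rw [Finset.sum_congr rfl hstep,
          Finset.sum_range_reflect (fun l => ψ' (elemSymW addQ (s k) l) * ιP (ψ tk ^ (r k - l)))
            (r k + 1),
          hCf k (ψ tk)]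
        rfl
    refine ⟨hZ.1, hP2.1, ?_⟩
    apply hinjP
    rw [hP2.2, hZval, hψeq]

  -- the B-matrices of the two patterns agree
  have hB : ∀ w' : List (Fin n),
      (ycPat r addQ B₀ s η w').1 = (ygPat r addQ L z B₀ η w').1 := by
    have aux : ∀ (w' : List (Fin n))
        (X : Matrix (Fin n) (Fin n) ℤ × ((i : Fin n) → Fin (r i) → Q))
        (Y : Matrix (Fin n) (Fin n) ℤ × (Fin n → Bool) × (Fin n → Q)), X.1 = Y.1 →
        (List.foldl (ycStep r addQ) X w').1 = (List.foldl (ygStep r addQ L z) Y w').1 := by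
      intro w'
      induction w' with
      | nil => intro X Y h; exact h
      | cons c w' ih =>
        intro X Y h
        rw [List.foldl_cons, List.foldl_cons]
        exact ih _ _ (by show genMut r X.1 c = genMut r Y.1 c; rw [h])
    intro w'
    exact aux w' _ _ rfl
  have hycstep : ∀ (w' : List (Fin n)) (c : Fin n),
      ycPat r addQ B₀ s η (w' ++ [c]) = ycStep r addQ (ycPat r addQ B₀ s η w') c := by
    intro w' c
    show List.foldl _ _ (w' ++ [c]) = _
    rw [List.foldl_append, List.foldl_cons, List.foldl_nil]
    rfl
  have hygstep : ∀ (w' : List (Fin n)) (c : Fin n),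
      ygPat r addQ L z B₀ η (w' ++ [c]) = ygStep r addQ L z (ygPat r addQ L z B₀ η w') c := by
    intro w' c
    show List.foldl _ _ (w' ++ [c]) = _
    rw [List.foldl_append, List.foldl_cons, List.foldl_nil]
    rfl
  -- the main invariant
  have hInv : ∀ w' : List (Fin n), ∃ t : Fin n → Q,
      (∀ j, t j ∈ S) ∧
      (∀ j, (ygPat r addQ L z B₀ η w').2.2 j ∈ S) ∧
      (∀ j, ψ (t j) = ψ ((ygPat r addQ L z B₀ η w').2.2 j)) ∧
      (∀ (j : Fin n) (l : Fin (r j)), (ycPat r addQ B₀ s η w').2 j l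
          = vSgn s j ((ygPat r addQ L z B₀ η w').2.1 j) l * t j) := by
    intro w'
    induction w' using List.reverseRecOn with
    | nil => exact ⟨η, hη, hη, fun j => rfl, fun j l => rfl⟩
    | append_singleton w' c ih =>
      obtain ⟨t, htS, hgS, hψt, hform⟩ := ih
      rw [hycstep w' c, hygstep w' c]
      have hprod1 : (∏ m : Fin (r c), (ycPat r addQ B₀ s η w').2 c m)
          = ∏ m : Fin (r c), vSgn s c ((ygPat r addQ L z B₀ η w').2.1 c) m * t c :=
        Finset.prod_congr rfl fun m _ => hform c m
      have hprod2 : (∏ m : Fin (r c), addQ 1 ((ycPat r addQ B₀ s η w').2 c m))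
          = ∏ m : Fin (r c), addQ 1
              (vSgn s c ((ygPat r addQ L z B₀ η w').2.1 c) m * t c) :=
        Finset.prod_congr rfl fun m _ => by rw [hform c m]
      have hKc := hKey c ((ygPat r addQ L z B₀ η w').2.1 c) (t c)
        ((ygPat r addQ L z B₀ η w').2.2 c) (htS c) (hgS c) (hψt c)
      have hP1c := hP1 c ((ygPat r addQ L z B₀ η w').2.1 c) (t c) (htS c)
      refine ⟨fun j => if j = c then (t c)⁻¹ else
          t j * (∏ m : Fin (r c), (ycPat r addQ B₀ s η w').2 c m)
              ^ intPos ((ycPat r addQ B₀ s η w').1 c j)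
            * (∏ m : Fin (r c), addQ 1 ((ycPat r addQ B₀ s η w').2 c m))
              ^ (-((ycPat r addQ B₀ s η w').1 c j)), ?_, ?_, ?_, ?_⟩
      · intro j
        by_cases hj : j = c
        · simp only [if_pos hj]; exact (hSinv _ (htS c)).1
        · simp only [if_neg hj]
          have hm1 : (∏ m : Fin (r c), (ycPat r addQ B₀ s η w').2 c m)
              ^ intPos ((ycPat r addQ B₀ s η w').1 c j) ∈ S := by
            rw [hprod1]; exact (hSzpow _ hP1c.1 _).1
          have hm2 : (∏ m : Fin (r c), addQ 1 ((ycPat r addQ B₀ s η w').2 c m))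
              ^ (-((ycPat r addQ B₀ s η w').1 c j)) ∈ S := by
            rw [hprod2]; exact (hSzpow _ hKc.2.1 _).1
          exact (hSmul _ (hSmul _ (htS j) _ hm1).1 _ hm2).1
      · intro j
        show (if j = c then ((ygPat r addQ L z B₀ η w').2.2 c)⁻¹ else _) ∈ S
        by_cases hj : j = c
        · rw [if_pos hj]; exact (hSinv _ (hgS c)).1
        · rw [if_neg hj]
          exact (hSmul _ (hSmul _ (hgS j) _
            (hSpow _ (hSzpow _ (hgS c) _).1 _).1).1 _ (hSzpow _ hKc.1 _).1).1
      · intro j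
        show ψ (if j = c then (t c)⁻¹ else _)
            = ψ (if j = c then ((ygPat r addQ L z B₀ η w').2.2 c)⁻¹ else _)
        by_cases hj : j = c
        · rw [if_pos hj, if_pos hj, (hSinv _ (htS c)).2, (hSinv _ (hgS c)).2, hψt c]
        · rw [if_neg hj, if_neg hj]
          have hm1 : (∏ m : Fin (r c), (ycPat r addQ B₀ s η w').2 c m)
              ^ intPos ((ycPat r addQ B₀ s η w').1 c j) ∈ S := by
            rw [hprod1]; exact (hSzpow _ hP1c.1 _).1
          have hm2 : (∏ m : Fin (r c), addQ 1 ((ycPat r addQ B₀ s η w').2 c m))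
              ^ (-((ycPat r addQ B₀ s η w').1 c j)) ∈ S := by
            rw [hprod2]; exact (hSzpow _ hKc.2.1 _).1
          have hv1 : ψ ((∏ m : Fin (r c), (ycPat r addQ B₀ s η w').2 c m)
              ^ intPos ((ycPat r addQ B₀ s η w').1 c j))
              = (ψ ((ygPat r addQ L z B₀ η w').2.2 c) ^ (r c))
                  ^ intPos ((ycPat r addQ B₀ s η w').1 c j) := by
            rw [hprod1, (hSzpow _ hP1c.1 _).2, hP1c.2, hψt c]
          have hv2 : ψ ((∏ m : Fin (r c), addQ 1 ((ycPat r addQ B₀ s η w').2 c m))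
              ^ (-((ycPat r addQ B₀ s η w').1 c j)))
              = ψ (Zval addQ (L c) (z c) (r c) ((ygPat r addQ L z B₀ η w').2.1 c)
                  ((ygPat r addQ L z B₀ η w').2.2 c))
                  ^ (-((ycPat r addQ B₀ s η w').1 c j)) := by
            rw [hprod2, (hSzpow _ hKc.2.1 _).2, hKc.2.2]
          have hg1 : ((ygPat r addQ L z B₀ η w').2.2 c
              ^ intPos ((ygPat r addQ L z B₀ η w').1 c j)) ^ (r c) ∈ S :=
            (hSpow _ (hSzpow _ (hgS c) _).1 _).1
          have hg2 : Zval addQ (L c) (z c) (r c) ((ygPat r addQ L z B₀ η w').2.1 c)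
              ((ygPat r addQ L z B₀ η w').2.2 c)
              ^ (-((ygPat r addQ L z B₀ η w').1 c j)) ∈ S := (hSzpow _ hKc.1 _).1
          rw [(hSmul _ (hSmul _ (htS j) _ hm1).1 _ hm2).2, (hSmul _ (htS j) _ hm1).2,
            hv1, hv2, hψt j,
            (hSmul _ (hSmul _ (hgS j) _ hg1).1 _ hg2).2, (hSmul _ (hgS j) _ hg1).2,
            (hSpow _ (hSzpow _ (hgS c) _).1 _).2, (hSzpow _ (hgS c) _).2,
            (hSzpow _ hKc.1 _).2, hB w',
            zpow_npow_comm (ψ ((ygPat r addQ L z B₀ η w').2.2 c))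
              (intPos ((ygPat r addQ L z B₀ η w').1 c j)) (r c)]
      · intro j l
        show (if j = c then fun l => ((ycPat r addQ B₀ s η w').2 j l)⁻¹ else _) l
            = vSgn s j (if j = c then !(ygPat r addQ L z B₀ η w').2.1 c
                else (ygPat r addQ L z B₀ η w').2.1 j) l * _
        by_cases hj : j = c
        · subst hj
          simp only [eq_self_iff_true, if_true]
          rw [hform j l, mul_inv]
          congr 1
          cases hσ : (ygPat r addQ L z B₀ η w').2.1 j <;> simp [vSgn]
        · simp only [if_neg hj]
          show (ycPat r addQ B₀ s η w').2 j l
              * (∏ m : Fin (r c), (ycPat r addQ B₀ s η w').2 c m)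
                  ^ intPos ((ycPat r addQ B₀ s η w').1 c j)
              * (∏ m : Fin (r c), addQ 1 ((ycPat r addQ B₀ s η w').2 c m))
                  ^ (-((ycPat r addQ B₀ s η w').1 c j)) = _
          rw [hform j l]
          simp only [mul_assoc]
  -- conclusion
  obtain ⟨t, htS, hgS, hψt, hform⟩ := hInv w
  have hprod : (∏ l : Fin (r i), (ycPat r addQ B₀ s η w).2 i l)
      = ∏ l : Fin (r i), vSgn s i ((ygPat r addQ L z B₀ η w).2.1 i) l * t i :=
    Finset.prod_congr rfl fun l _ => hform i l
  have hP1i := hP1 i ((ygPat r addQ L z B₀ η w).2.1 i) (t i) (htS i)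
  have hval : ψ (∏ l : Fin (r i), (ycPat r addQ B₀ s η w).2 i l)
      = ψ ((ygPat r addQ L z B₀ η w).2.2 i) ^ (r i) := by
    rw [hprod, hP1i.2, hψt i]
  refine ⟨by rw [hprod]; exact hP1i.1, hval, ?_⟩
  intro p hp
  rw [hval] at hp
  have h1 : (p * (ψ ((ygPat r addQ L z B₀ η w).2.2 i))⁻¹) ^ (r i) = 1 := by
    rw [mul_pow, inv_pow, hp, mul_inv_cancel]
  have h2 := wsTorsionFree addP haddPc haddPa haddPd (hr i) h1
  rwa [mul_inv_eq_one] at h2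
end

section
/- Every semifield is torsion-free as a multiplicative group: if P is a semifield, p ∈ P, and m ≥ 1 is an integer with p^m = 1, then p = 1. Consequently, for every integer m ≥ 1 the map p ↦ p^m on P is injective. -/
section aux
variable {P : Type*} [CommGroup P] (add : P → P → P) (p : P)

/-- `fsum n = 1 ⊕ p ⊕ ⋯ ⊕ pⁿ`. -/
def fsum : ℕ → P
  | 0 => 1
  | n+1 => add (fsum n) (p ^ (n+1))

/-- `gsum k = p ⊕ p² ⊕ ⋯ ⊕ p^(k+1)`. -/
def gsum : ℕ → P
  | 0 => p
  | k+1 => add (gsum k) (p ^ (k+2))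

variable (hcomm : ∀ a b : P, add a b = add b a)
    (hassoc : ∀ a b c : P, add (add a b) c = add a (add b c))
    (hdistrib : ∀ p q₁ q₂ : P, p * add q₁ q₂ = add (p * q₁) (p * q₂))

include hassoc in
lemma fsum_succ : ∀ k : ℕ, fsum add p (k+1) = add 1 (gsum add p k)
  | 0 => by simp [fsum, gsum]
  | k+1 => by
    rw [show k+1+1 = (k+1)+1 from rfl, fsum, fsum_succ k, hassoc]
    rfl

include hdistrib in
lemma mul_fsum : ∀ k : ℕ, p * fsum add p k = gsum add p k
  | 0 => by simp [fsum, gsum]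
  | k+1 => by
    rw [fsum, hdistrib, mul_fsum k, gsum, ← pow_succ']

end aux

/-- Every semifield (a multiplicative abelian group `P` with a commutative,
associative, distributive auxiliary addition `add`) is torsion-free as a multiplicative group:
`p ^ m = 1` with `m ≥ 1` implies `p = 1`;  consequently `p ↦ p ^ m` is injective for every
`m ≥ 1`. -/
theorem semifield_torsion_free (P : Type*) [CommGroup P] (add : P → P → P)
    (hcomm : ∀ a b : P, add a b = add b a)
    (hassoc : ∀ a b c : P, add (add a b) c = add a (add b c))
    (hdistrib : ∀ p q₁ q₂ : P, p * add q₁ q₂ = add (p * q₁) (p * q₂)) :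
    (∀ (p : P) (m : ℕ), 1 ≤ m → p ^ m = 1 → p = 1) ∧
    (∀ m : ℕ, 1 ≤ m → Function.Injective (fun p : P => p ^ m)) := by
  have tors : ∀ (p : P) (m : ℕ), 1 ≤ m → p ^ m = 1 → p = 1 := by
    intro p m hm hpm
    obtain ⟨n, rfl⟩ := Nat.exists_eq_add_of_le hm
    cases n with
    | zero => simpa using hpm
    | succ k =>
      -- p ^ (k+2) = 1
      have hpow : p ^ (k+2) = 1 := by rw [show k+2 = 1+(k+1) by omega]; exact hpm
      have key : p * fsum add p (k+1) = fsum add p (k+1) := by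
        rw [mul_fsum add p hdistrib, gsum, hpow, hcomm,
          fsum_succ add p hassoc]
      exact mul_right_cancel (by rw [key, one_mul] : p * fsum add p (k+1) = 1 * fsum add p (k+1))
  refine ⟨tors, ?_⟩
  intro m hm a b hab
  simp only at hab
  have : (a * b⁻¹) ^ m = 1 := by
    rw [mul_pow, inv_pow, hab, mul_inv_cancel]
  have := tors _ m hm this
  exact mul_inv_eq_one.mp this
end

section
/- For every word w, all i, j ∈ {1,…,n}, and all l, l' ∈ {1,…,r_i}, m, m' ∈ {1,…,r_j}: G^c(w)_{(i,l),(j,m)} − σ_{j;w}·δ_{(i,l),(j,m)} = G^c(w)_{(i,l'),(j,m')} − σ_{j;w}·δ_{(i,l'),(j,m')}, where δ is the Kronecker delta on D; that is, the quantity G̃^c(w)_{ij} := G^c(w)_{(i,l),(j,m)} − σ_{j;w}δ_{(i,l),(j,m)} is independent of l and m. -/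
/-- The identity `D × D` matrix. -/
def idMat {n : ℕ} {r : Fin n → ℕ} : DIdx n r → DIdx n r → ℤ :=
  fun d e => if d = e then 1 else 0

/-- One mutation step for the triple `(B̂, Ĉ, Ĝ)` in direction `p ∈ D`; `E0 = B̂(∅)`. -/
def hatStep {n : ℕ} {r : Fin n → ℕ} (E0 : DIdx n r → DIdx n r → ℤ)
    (st : (DIdx n r → DIdx n r → ℤ) × (DIdx n r → DIdx n r → ℤ) × (DIdx n r → DIdx n r → ℤ))
    (p : DIdx n r) :
    (DIdx n r → DIdx n r → ℤ) × (DIdx n r → DIdx n r → ℤ) × (DIdx n r → DIdx n r → ℤ) :=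
  (matMut st.1 p,
   fun d e =>
     if e = p then -(st.2.1 d p)
     else st.2.1 d e + st.2.1 d p * intPos (st.1 p e) + intPos (-(st.2.1 d p)) * st.1 p e,
   fun d e =>
     if e = p then
       -(st.2.2 d p) + ∑ a : DIdx n r,
         (st.2.2 d a * intPos (-(st.1 a p)) - E0 d a * intPos (-(st.2.1 a p)))
     else st.2.2 d e)

/-- The triple `(B̂(v), Ĉ(v), Ĝ(v))` attached to a word `v` over `D`. -/
def hatPat {n : ℕ} (r : Fin n → ℕ) (B₀ : Matrix (Fin n) (Fin n) ℤ) (v : List (DIdx n r)) :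
    (DIdx n r → DIdx n r → ℤ) × (DIdx n r → DIdx n r → ℤ) × (DIdx n r → DIdx n r → ℤ) :=
  v.foldl (hatStep (enlarge r B₀)) (enlarge r B₀, idMat, idMat)

/-- `expand w`: replace each letter `k` of `w` by `(k,1), (k,2), …, (k,r_k)`. -/
def expandWord {n : ℕ} (r : Fin n → ℕ) (w : List (Fin n)) : List (DIdx n r) :=
  w.flatMap fun k => (List.finRange (r k)).map fun l => ⟨k, l⟩

/-- The composite matrices `B^c(w) = B̂(expand w)`, `C^c(w) = Ĉ(expand w)`,
`G^c(w) = Ĝ(expand w)`. -/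
def Bc {n : ℕ} (r : Fin n → ℕ) (B₀ : Matrix (Fin n) (Fin n) ℤ) (w : List (Fin n)) :
    DIdx n r → DIdx n r → ℤ := (hatPat r B₀ (expandWord r w)).1

def Cc {n : ℕ} (r : Fin n → ℕ) (B₀ : Matrix (Fin n) (Fin n) ℤ) (w : List (Fin n)) :
    DIdx n r → DIdx n r → ℤ := (hatPat r B₀ (expandWord r w)).2.1

def Gc {n : ℕ} (r : Fin n → ℕ) (B₀ : Matrix (Fin n) (Fin n) ℤ) (w : List (Fin n)) :
    DIdx n r → DIdx n r → ℤ := (hatPat r B₀ (expandWord r w)).2.2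

/-- One mutation step for the triple `(B, C^g, G^g)` in direction `k ∈ {1,…,n}`. -/
def genStep {n : ℕ} (r : Fin n → ℕ) (B₀ : Matrix (Fin n) (Fin n) ℤ)
    (st : Matrix (Fin n) (Fin n) ℤ × Matrix (Fin n) (Fin n) ℤ × Matrix (Fin n) (Fin n) ℤ)
    (k : Fin n) :
    Matrix (Fin n) (Fin n) ℤ × Matrix (Fin n) (Fin n) ℤ × Matrix (Fin n) (Fin n) ℤ :=
  (genMut r st.1 k,
   Matrix.of fun i j =>
     if j = k then -(st.2.1 i k)
     else st.2.1 i j + (r k : ℤ) * (st.2.1 i k * intPos (st.1 k j)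
       + intPos (-(st.2.1 i k)) * st.1 k j),
   Matrix.of fun i j =>
     if j = k then
       -(st.2.2 i k) + (r k : ℤ) * ∑ a : Fin n,
         (st.2.2 i a * intPos (-(st.1 a k)) - B₀ i a * intPos (-(st.2.1 a k)))
     else st.2.2 i j)

/-- The triple `(B(w), C^g(w), G^g(w))` attached to a word `w` over `{1,…,n}`. -/
def genPat {n : ℕ} (r : Fin n → ℕ) (B₀ : Matrix (Fin n) (Fin n) ℤ) (w : List (Fin n)) :
    Matrix (Fin n) (Fin n) ℤ × Matrix (Fin n) (Fin n) ℤ × Matrix (Fin n) (Fin n) ℤ :=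
  w.foldl (genStep r B₀) (B₀, 1, 1)

/-- The Kronecker delta on `D`. -/
def deltaD {n : ℕ} {r : Fin n → ℕ} (d e : DIdx n r) : ℤ := if d = e then 1 else 0
namespace GcAux
set_option maxRecDepth 40000

open Finset

variable {n : ℕ} (r : Fin n → ℕ) (B₀ : Matrix (Fin n) (Fin n) ℤ) (dq : Fin n → ℚ)

lemma intPos_zero : intPos 0 = 0 := rfl

@[simp] lemma enlarge_apply (B : Matrix (Fin n) (Fin n) ℤ) (d e : DIdx n r) :
    enlarge r B d e = B d.1 e.1 := rfl

lemma mk_eq_mk_iff {i k : Fin n} {l : Fin (r i)} {tf : Fin (r k)} :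
    (⟨i, l⟩ : DIdx n r) = ⟨k, tf⟩ ↔ i = k ∧ (l : ℕ) = (tf : ℕ) := by
  constructor
  · intro h
    obtain ⟨h1, h2⟩ := Sigma.mk.inj_iff.mp h
    subst h1
    exact ⟨rfl, congrArg Fin.val (eq_of_heq h2)⟩
  · rintro ⟨rfl, h2⟩
    exact congrArg (Sigma.mk i) (Fin.ext h2)

/-- `d_i Z_{ij} = -(d_j Z_{ji})`. -/
def Skew (Z : Matrix (Fin n) (Fin n) ℤ) : Prop :=
  ∀ i j, dq i * (Z i j : ℚ) = -(dq j * (Z j i : ℚ))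

lemma Skew.diag (hdq : ∀ i, 0 < dq i) {Z : Matrix (Fin n) (Fin n) ℤ}
    (h : Skew dq Z) (k : Fin n) : Z k k = 0 := by
  have h2 : dq k * ((Z k k : ℚ) * 2) = 0 := by linear_combination h k k
  rcases mul_eq_zero.mp h2 with h3 | h3
  · exact absurd h3 (hdq k).ne'
  · have : (Z k k : ℚ) = 0 := by linarith
    exact_mod_cast this

/-- The state-shape invariant. -/
def Shape (st : (DIdx n r → DIdx n r → ℤ) × (DIdx n r → DIdx n r → ℤ) × (DIdx n r → DIdx n r → ℤ))
    (Z X Y : Matrix (Fin n) (Fin n) ℤ) (s : Fin n → ℤ) : Prop :=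
  (∀ d e, st.1 d e = Z d.1 e.1) ∧
  (∀ d e, st.2.1 d e = X d.1 e.1 + s e.1 * deltaD d e) ∧
  (∀ d e, st.2.2 d e = Y d.1 e.1 + s e.1 * deltaD d e)

/-- `g^X_{ij}`. -/
def gXf (k : Fin n) (Z X : Matrix (Fin n) (Fin n) ℤ) (i j : Fin n) : ℤ :=
  X i k * intPos (Z k j) + intPos (-(X i k)) * Z k j

/-- `h^X_j`. -/
def hXf (k : Fin n) (Z X : Matrix (Fin n) (Fin n) ℤ) (s : Fin n → ℤ) (j : Fin n) : ℤ :=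
  (X k k + s k) * intPos (Z k j) + intPos (-(X k k + s k)) * Z k j

/-- The value of the new `k`-block columns of `Ĝ`. -/
def Wf (k : Fin n) (Z X Y : Matrix (Fin n) (Fin n) ℤ) (s : Fin n → ℤ) (i : Fin n) : ℤ :=
  -(Y i k) + (∑ i' : Fin n, if i' = k then 0 else (r i' : ℤ) * (Y i i' * intPos (-(Z i' k))))
    + (if i = k then 0 else s i * intPos (-(Z i k)))
    - (∑ i' : Fin n, (r i' : ℤ) * (B₀ i i' * intPos (-(X i' k))))
    - B₀ i k * (intPos (-(X k k + s k)) - intPos (-(X k k)))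

/-- `B̂` after `t` single mutations of the `k`-th block. -/
def midB (k : Fin n) (t : ℕ) (Z : Matrix (Fin n) (Fin n) ℤ) : DIdx n r → DIdx n r → ℤ :=
  fun d e =>
    if d.1 = k then (if e.1 = k then 0 else if (d.2 : ℕ) < t then -(Z k e.1) else Z k e.1)
    else if e.1 = k then (if (e.2 : ℕ) < t then -(Z d.1 k) else Z d.1 k)
    else Z d.1 e.1 + (t : ℤ) * (Z d.1 k * intPos (Z k e.1) + intPos (-(Z d.1 k)) * Z k e.1)

/-- `Ĉ` after `t` single mutations of the `k`-th block. -/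
def midC (k : Fin n) (t : ℕ) (Z X : Matrix (Fin n) (Fin n) ℤ) (s : Fin n → ℤ) :
    DIdx n r → DIdx n r → ℤ :=
  fun d e =>
    if e.1 = k then (if (e.2 : ℕ) < t then -1 else 1) * (X d.1 k + s k * deltaD d e)
    else X d.1 e.1 + s e.1 * deltaD d e + (t : ℤ) * gXf k Z X d.1 e.1
      + (if d.1 = k ∧ (d.2 : ℕ) < t then hXf k Z X s e.1 - gXf k Z X k e.1 else 0)

/-- `Ĝ` after `t` single mutations of the `k`-th block. -/
def midG (k : Fin n) (t : ℕ) (Y : Matrix (Fin n) (Fin n) ℤ) (s : Fin n → ℤ) (W : Fin n → ℤ) :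
    DIdx n r → DIdx n r → ℤ :=
  fun d e =>
    if e.1 = k ∧ (e.2 : ℕ) < t then W d.1 + (-(s k)) * deltaD d e
    else Y d.1 e.1 + s e.1 * deltaD d e

lemma stepB (k : Fin n) (Z : Matrix (Fin n) (Fin n) ℤ) (hkk : Z k k = 0) (tf : Fin (r k)) :
    matMut (midB r k (tf : ℕ) Z) ⟨k, tf⟩ = midB r k ((tf : ℕ) + 1) Z := by
  funext d e
  obtain ⟨i, l⟩ := d
  obtain ⟨j, m⟩ := e
  by_cases hi : i = k
  · subst hi
    by_cases hj : j = i
    · subst hj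
      simp only [matMut, midB]
      split_ifs <;> norm_num [intPos]
    · have he : (⟨j, m⟩ : DIdx n r) ≠ ⟨i, tf⟩ := by simp [mk_eq_mk_iff r, hj]
      rcases Nat.lt_trichotomy (l : ℕ) (tf : ℕ) with hl | hl | hl
      · have hd : (⟨i, l⟩ : DIdx n r) ≠ ⟨i, tf⟩ := by simp [mk_eq_mk_iff r]; omega
        simp [matMut, midB, hd, he, hj, hl, intPos, show (l : ℕ) < (tf : ℕ) + 1 by omega]
      · have hd : (⟨i, l⟩ : DIdx n r) = ⟨i, tf⟩ := by rw [mk_eq_mk_iff r]; exact ⟨rfl, hl⟩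
        simp [matMut, midB, hd, hj, Fin.lt_def, show ¬ (tf : ℕ) < (tf : ℕ) by omega,
          show (tf : ℕ) < (tf : ℕ) + 1 by omega, show ¬ (l : ℕ) < (tf : ℕ) by omega,
          show (l : ℕ) < (tf : ℕ) + 1 by omega]
      · have hd : (⟨i, l⟩ : DIdx n r) ≠ ⟨i, tf⟩ := by simp [mk_eq_mk_iff r]; omega
        simp [matMut, midB, hd, he, hj, intPos, show ¬ (l : ℕ) < (tf : ℕ) by omega,
          show ¬ (l : ℕ) < (tf : ℕ) + 1 by omega]
  · by_cases hj : j = k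
    · subst hj
      have hd : (⟨i, l⟩ : DIdx n r) ≠ ⟨j, tf⟩ := by simp [mk_eq_mk_iff r, hi]
      rcases Nat.lt_trichotomy (m : ℕ) (tf : ℕ) with hm | hm | hm
      · have he : (⟨j, m⟩ : DIdx n r) ≠ ⟨j, tf⟩ := by simp [mk_eq_mk_iff r]; omega
        simp [matMut, midB, hd, he, hi, hm, intPos, show (m : ℕ) < (tf : ℕ) + 1 by omega]
      · have he : (⟨j, m⟩ : DIdx n r) = ⟨j, tf⟩ := by rw [mk_eq_mk_iff r]; exact ⟨rfl, hm⟩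
        simp [matMut, midB, hd, he, hi, Fin.lt_def, show ¬ (tf : ℕ) < (tf : ℕ) by omega,
          show (tf : ℕ) < (tf : ℕ) + 1 by omega, show ¬ (m : ℕ) < (tf : ℕ) by omega,
          show (m : ℕ) < (tf : ℕ) + 1 by omega]
      · have he : (⟨j, m⟩ : DIdx n r) ≠ ⟨j, tf⟩ := by simp [mk_eq_mk_iff r]; omega
        simp [matMut, midB, hd, he, hi, intPos, show ¬ (m : ℕ) < (tf : ℕ) by omega,
          show ¬ (m : ℕ) < (tf : ℕ) + 1 by omega]
    · have hd : (⟨i, l⟩ : DIdx n r) ≠ ⟨k, tf⟩ := by simp [mk_eq_mk_iff r, hi]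
      have he : (⟨j, m⟩ : DIdx n r) ≠ ⟨k, tf⟩ := by simp [mk_eq_mk_iff r, hj]
      simp [matMut, midB, hd, he, hi, hj, show ¬ (tf : ℕ) < (tf : ℕ) by omega]
      push_cast
      ring

lemma stepC (k : Fin n) (Z X : Matrix (Fin n) (Fin n) ℤ) (s : Fin n → ℤ)
    (hkk : Z k k = 0) (tf : Fin (r k)) :
    (fun d e =>
      if e = (⟨k, tf⟩ : DIdx n r) then -(midC r k (tf : ℕ) Z X s d ⟨k, tf⟩)
      else midC r k (tf : ℕ) Z X s d e
        + midC r k (tf : ℕ) Z X s d ⟨k, tf⟩ * intPos (midB r k (tf : ℕ) Z ⟨k, tf⟩ e)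
        + intPos (-(midC r k (tf : ℕ) Z X s d ⟨k, tf⟩)) * midB r k (tf : ℕ) Z ⟨k, tf⟩ e)
    = midC r k ((tf : ℕ) + 1) Z X s := by
  funext d e
  obtain ⟨i, l⟩ := d
  obtain ⟨j, m⟩ := e
  by_cases hj : j = k
  · subst hj
    by_cases hm : (m : ℕ) = (tf : ℕ)
    · have : m = tf := Fin.ext hm
      subst this
      simp [midC, show ¬ (m : ℕ) < (m : ℕ) by omega,
        show (m : ℕ) < (m : ℕ) + 1 by omega]
    · have he : (⟨j, m⟩ : DIdx n r) ≠ ⟨j, tf⟩ := by simp [mk_eq_mk_iff r]; omega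
      rw [if_neg he]
      by_cases hmt : (m : ℕ) < (tf : ℕ)
      · simp [midC, midB, he, intPos, hmt, show (m : ℕ) < (tf : ℕ) + 1 by omega]
      · simp [midC, midB, he, intPos, hmt, show ¬ (m : ℕ) < (tf : ℕ) + 1 by omega]
  · have he : (⟨j, m⟩ : DIdx n r) ≠ ⟨k, tf⟩ := by simp [mk_eq_mk_iff r, hj]
    rw [if_neg he]
    by_cases hi : i = k
    · subst hi
      have hj' : ¬ i = j := fun h => hj h.symm
      have hde : ∀ (l' : Fin (r i)), ((⟨i, l'⟩ : DIdx n r)) ≠ ⟨j, m⟩ := by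
        intro l' h
        exact hj' (Sigma.mk.inj_iff.mp h).1
      by_cases hl : (l : ℕ) = (tf : ℕ)
      · have : l = tf := Fin.ext hl
        subst this
        simp [midC, midB, deltaD, hde, hj, gXf, hXf,
          show ¬ (l : ℕ) < (l : ℕ) by omega, show (l : ℕ) < (l : ℕ) + 1 by omega]
        first
        | ring
        | (split_ifs <;> first | ring | (exfalso; omega))
      · have hd : (⟨i, l⟩ : DIdx n r) ≠ ⟨i, tf⟩ := by simp [mk_eq_mk_iff r]; omega
        by_cases hlt : (l : ℕ) < (tf : ℕ)
        · simp [midC, midB, deltaD, hd, hde, hj, hlt, gXf, hXf, Fin.lt_def,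
            show ¬ (tf : ℕ) < (tf : ℕ) by omega, show (l : ℕ) < (tf : ℕ) + 1 by omega]
          first
          | ring
          | (split_ifs <;> first | ring | (exfalso; omega))
        · simp [midC, midB, deltaD, hd, hde, hj, hlt, gXf, hXf, Fin.lt_def,
            show ¬ (tf : ℕ) < (tf : ℕ) by omega, show ¬ (l : ℕ) < (tf : ℕ) + 1 by omega]
          first
          | ring
          | (split_ifs <;> first | ring | (exfalso; omega))
    · have hd : (⟨i, l⟩ : DIdx n r) ≠ ⟨k, tf⟩ := by simp [mk_eq_mk_iff r, hi]
      simp [midC, midB, deltaD, hd, hi, hj, gXf, hXf,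
        show ¬ (tf : ℕ) < (tf : ℕ) by omega]
      first
      | ring
      | (split_ifs <;> first | ring | (exfalso; omega))

lemma sumS (k : Fin n) (Z X Y : Matrix (Fin n) (Fin n) ℤ) (s : Fin n → ℤ)
    (hkk : Z k k = 0) (tf : Fin (r k)) (d : DIdx n r) :
    (∑ a : DIdx n r,
        (midG r k (tf : ℕ) Y s (Wf r B₀ k Z X Y s) d a
            * intPos (-(midB r k (tf : ℕ) Z a ⟨k, tf⟩))
          - enlarge r B₀ d a * intPos (-(midC r k (tf : ℕ) Z X s a ⟨k, tf⟩))))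
    = (∑ i' : Fin n, if i' = k then 0 else (r i' : ℤ) * (Y d.1 i' * intPos (-(Z i' k))))
      + (if d.1 = k then 0 else s d.1 * intPos (-(Z d.1 k)))
      - (∑ i' : Fin n, (r i' : ℤ) * (B₀ d.1 i' * intPos (-(X i' k))))
      - B₀ d.1 k * (intPos (-(X k k + s k)) - intPos (-(X k k))) := by
  have key : ∀ a : DIdx n r,
      midG r k (tf : ℕ) Y s (Wf r B₀ k Z X Y s) d a
          * intPos (-(midB r k (tf : ℕ) Z a ⟨k, tf⟩))
        - enlarge r B₀ d a * intPos (-(midC r k (tf : ℕ) Z X s a ⟨k, tf⟩))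
      = ((if a.1 = k then 0 else Y d.1 a.1 * intPos (-(Z a.1 k)))
          - B₀ d.1 a.1 * intPos (-(X a.1 k)))
        + (if a = d then (if d.1 = k then 0 else s d.1 * intPos (-(Z d.1 k))) else 0)
        + (if a = (⟨k, tf⟩ : DIdx n r) then
            -(B₀ d.1 k * (intPos (-(X k k + s k)) - intPos (-(X k k)))) else 0) := by
    intro a
    obtain ⟨i', l'⟩ := a
    by_cases hik : i' = k
    · subst hik
      by_cases hp : (l' : ℕ) = (tf : ℕ)
      · have : l' = tf := Fin.ext hp
        subst this
        by_cases had : (⟨i', l'⟩ : DIdx n r) = d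
        · rw [← had]
          simp [midG, midB, midC, deltaD, intPos,
            show ¬ (l' : ℕ) < (l' : ℕ) by omega]
          ring
        · simp [midG, midB, midC, deltaD, had, intPos,
            show ¬ (l' : ℕ) < (l' : ℕ) by omega]
          ring
      · have hap : (⟨i', l'⟩ : DIdx n r) ≠ ⟨i', tf⟩ := by simp [mk_eq_mk_iff r]; omega
        by_cases had : (⟨i', l'⟩ : DIdx n r) = d
        · rw [← had]
          simp [midG, midB, midC, deltaD, hap, intPos,
            show ¬ (tf : ℕ) < (tf : ℕ) by omega]
        · simp [midG, midB, midC, deltaD, hap, had, intPos,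
            show ¬ (tf : ℕ) < (tf : ℕ) by omega]
    · have hap : (⟨i', l'⟩ : DIdx n r) ≠ ⟨k, tf⟩ := by simp [mk_eq_mk_iff r, hik]
      by_cases had : (⟨i', l'⟩ : DIdx n r) = d
      · rw [← had]
        simp [midG, midB, midC, deltaD, hap, hik, enlarge,
          show ¬ (tf : ℕ) < (tf : ℕ) by omega]
        ring
      · have had' : d ≠ (⟨i', l'⟩ : DIdx n r) := fun h => had h.symm
        simp [midG, midB, midC, deltaD, hap, had, had', hik,
          show ¬ (tf : ℕ) < (tf : ℕ) by omega]
  rw [Finset.sum_congr rfl (fun a _ => key a)]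
  rw [Finset.sum_add_distrib, Finset.sum_add_distrib, Finset.sum_ite_eq' Finset.univ,
    Finset.sum_ite_eq' Finset.univ]
  simp only [Finset.mem_univ, if_true]
  rw [← Finset.univ_sigma_univ, Finset.sum_sigma]
  have hsum : ∀ i' : Fin n,
      (∑ _l : Fin (r i'), ((if i' = k then 0 else Y d.1 i' * intPos (-(Z i' k)))
        - B₀ d.1 i' * intPos (-(X i' k))))
      = (if i' = k then 0 else (r i' : ℤ) * (Y d.1 i' * intPos (-(Z i' k))))
        - (r i' : ℤ) * (B₀ d.1 i' * intPos (-(X i' k))) := by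
    intro i'
    rw [Finset.sum_const, Finset.card_univ, Fintype.card_fin, nsmul_eq_mul]
    split_ifs <;> ring
  rw [Finset.sum_congr rfl (fun i' _ => hsum i'), Finset.sum_sub_distrib]
  ring

lemma stepG (k : Fin n) (Z X Y : Matrix (Fin n) (Fin n) ℤ) (s : Fin n → ℤ)
    (hkk : Z k k = 0) (tf : Fin (r k)) :
    (fun d e =>
      if e = (⟨k, tf⟩ : DIdx n r) then
        -(midG r k (tf : ℕ) Y s (Wf r B₀ k Z X Y s) d ⟨k, tf⟩)
          + ∑ a : DIdx n r,
            (midG r k (tf : ℕ) Y s (Wf r B₀ k Z X Y s) d a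
                * intPos (-(midB r k (tf : ℕ) Z a ⟨k, tf⟩))
              - enlarge r B₀ d a * intPos (-(midC r k (tf : ℕ) Z X s a ⟨k, tf⟩)))
      else midG r k (tf : ℕ) Y s (Wf r B₀ k Z X Y s) d e)
    = midG r k ((tf : ℕ) + 1) Y s (Wf r B₀ k Z X Y s) := by
  funext d e
  by_cases hep : e = (⟨k, tf⟩ : DIdx n r)
  · subst hep
    rw [if_pos rfl, sumS r B₀ k Z X Y s hkk tf d]
    simp only [midG, Wf, show ¬ (tf : ℕ) < (tf : ℕ) by omega, and_false, if_false,
      show (tf : ℕ) < (tf : ℕ) + 1 by omega, and_true]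
    split_ifs <;> ring
  · rw [if_neg hep]
    obtain ⟨j, m⟩ := e
    by_cases hj : j = k
    · subst hj
      have hm : (m : ℕ) ≠ (tf : ℕ) := fun h => hep (by rw [mk_eq_mk_iff r]; exact ⟨rfl, h⟩)
      have hiff : ((m : ℕ) < (tf : ℕ) + 1) ↔ ((m : ℕ) < (tf : ℕ)) := by omega
      simp [midG, hiff]
    · simp [midG, hj]

lemma step_mid (k : Fin n) (Z X Y : Matrix (Fin n) (Fin n) ℤ) (s : Fin n → ℤ)
    (hkk : Z k k = 0) (tf : Fin (r k)) :
    hatStep (enlarge r B₀)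
      (midB r k (tf : ℕ) Z, midC r k (tf : ℕ) Z X s,
        midG r k (tf : ℕ) Y s (Wf r B₀ k Z X Y s)) ⟨k, tf⟩
    = (midB r k ((tf : ℕ) + 1) Z, midC r k ((tf : ℕ) + 1) Z X s,
        midG r k ((tf : ℕ) + 1) Y s (Wf r B₀ k Z X Y s)) := by
  exact Prod.ext (stepB r k Z hkk tf)
    (Prod.ext (stepC r k Z X s hkk tf) (stepG r B₀ k Z X Y s hkk tf))

lemma foldl_range_mid {α : Type*} (f : α → ℕ → α) (mid : ℕ → α) :
    ∀ m : ℕ, (∀ t, t < m → f (mid t) t = mid (t + 1)) →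
      List.foldl f (mid 0) (List.range m) = mid m := by
  intro m
  induction m with
  | zero => intro _; simp
  | succ m ih =>
    intro h
    rw [List.range_succ, List.foldl_append, ih (fun t ht => h t (by omega))]
    simpa using h m (by omega)

lemma block_eq (k : Fin n) (hk : 0 < r k) :
    (List.finRange (r k)).map (fun l => (⟨k, l⟩ : DIdx n r))
      = (List.range (r k)).map
          (fun u => (⟨k, ⟨u % r k, Nat.mod_lt u hk⟩⟩ : DIdx n r)) := by
  rw [← List.map_coe_finRange_eq_range (n := r k), List.map_map]
  apply List.map_congr_left
  intro l _
  exact congrArg (Sigma.mk k) (Fin.ext (Nat.mod_eq_of_lt l.isLt).symm)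

lemma fold_block (k : Fin n) (hk : 0 < r k) (Z X Y : Matrix (Fin n) (Fin n) ℤ)
    (s : Fin n → ℤ) (hkk : Z k k = 0) :
    List.foldl (hatStep (enlarge r B₀))
      (midB r k 0 Z, midC r k 0 Z X s, midG r k 0 Y s (Wf r B₀ k Z X Y s))
      ((List.finRange (r k)).map (fun l => (⟨k, l⟩ : DIdx n r)))
    = (midB r k (r k) Z, midC r k (r k) Z X s,
        midG r k (r k) Y s (Wf r B₀ k Z X Y s)) := by
  rw [block_eq r k hk, List.foldl_map]
  exact foldl_range_mid _
    (fun t => (midB r k t Z, midC r k t Z X s, midG r k t Y s (Wf r B₀ k Z X Y s)))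
    (r k)
    (fun t ht => by
      have heq : (⟨k, ⟨t % r k, Nat.mod_lt t hk⟩⟩ : DIdx n r) = ⟨k, ⟨t, ht⟩⟩ :=
        congrArg (Sigma.mk k) (Fin.ext (Nat.mod_eq_of_lt ht))
      rw [heq]
      exact step_mid r B₀ k Z X Y s hkk ⟨t, ht⟩)

lemma intPos_cast (x : ℤ) : ((intPos x : ℤ) : ℚ) = max (x : ℚ) 0 := by
  unfold intPos
  push_cast
  rfl

lemma Shape.congr_s {st : (DIdx n r → DIdx n r → ℤ) × (DIdx n r → DIdx n r → ℤ) ×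
      (DIdx n r → DIdx n r → ℤ)} {Z X Y : Matrix (Fin n) (Fin n) ℤ} {s s' : Fin n → ℤ}
    (h : Shape r st Z X Y s) (h' : ∀ j, s' j = s j) : Shape r st Z X Y s' :=
  ⟨h.1, fun d e => by rw [h.2.1 d e, h' e.1], fun d e => by rw [h.2.2 d e, h' e.1]⟩

lemma good_block (hdq : ∀ i, 0 < dq i) (k : Fin n) (hk : 0 < r k)
    (st : (DIdx n r → DIdx n r → ℤ) × (DIdx n r → DIdx n r → ℤ) × (DIdx n r → DIdx n r → ℤ))
    (s : Fin n → ℤ) (h : ∃ Z X Y, Skew dq Z ∧ Shape r st Z X Y s) :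
    ∃ Z X Y, Skew dq Z ∧ Shape r
      (List.foldl (hatStep (enlarge r B₀)) st
        ((List.finRange (r k)).map (fun l => (⟨k, l⟩ : DIdx n r))))
      Z X Y (fun j => if j = k then -(s j) else s j) := by
  obtain ⟨Z, X, Y, hsk, h1, h2, h3⟩ := h
  have hkk : Z k k = 0 := Skew.diag dq hdq hsk k
  -- the initial state is the mid-state at time 0
  have hst : st = (midB r k 0 Z, midC r k 0 Z X s, midG r k 0 Y s (Wf r B₀ k Z X Y s)) := by
    obtain ⟨stB, stCG⟩ := st
    obtain ⟨stC, stG⟩ := stCG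
    refine Prod.ext ?_ (Prod.ext ?_ ?_) <;> funext d e <;>
      obtain ⟨i, l⟩ := d <;> obtain ⟨j, m⟩ := e
    · rw [h1 ⟨i, l⟩ ⟨j, m⟩]
      show Z i j = midB r k 0 Z ⟨i, l⟩ ⟨j, m⟩
      by_cases hi : i = k
      · subst hi
        by_cases hj : j = i
        · subst hj
          simp [midB, hkk]
        · simp [midB, hj]
      · by_cases hj : j = k
        · subst hj
          simp [midB, hi]
        · simp [midB, hi, hj]
    · rw [h2 ⟨i, l⟩ ⟨j, m⟩]
      show X i j + s j * deltaD ⟨i, l⟩ ⟨j, m⟩ = midC r k 0 Z X s ⟨i, l⟩ ⟨j, m⟩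
      by_cases hj : j = k
      · subst hj
        simp [midC]
      · simp [midC, hj]
    · rw [h3 ⟨i, l⟩ ⟨j, m⟩]
      show Y i j + s j * deltaD ⟨i, l⟩ ⟨j, m⟩ = midG r k 0 Y s (Wf r B₀ k Z X Y s) ⟨i, l⟩ ⟨j, m⟩
      simp [midG]
  rw [hst, fold_block r B₀ k hk Z X Y s hkk]
  refine ⟨fun i j => if i = k ∨ j = k then -(Z i j)
      else Z i j + (r k : ℤ) * (Z i k * intPos (Z k j) + intPos (-(Z i k)) * Z k j),
    fun i j => if j = k then -(X i k)
      else X i j + (r k : ℤ) * gXf k Z X i j + (if i = k then hXf k Z X s j - gXf k Z X k j else 0),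
    fun i j => if j = k then Wf r B₀ k Z X Y s i else Y i j, ?_, ?_, ?_, ?_⟩
  · -- skew-symmetrizability is preserved
    intro i j
    beta_reduce
    by_cases hij : i = k ∨ j = k
    · have hij' : j = k ∨ i = k := hij.symm
      rw [if_pos hij, if_pos hij']
      push_cast
      linear_combination -hsk i j
    · have hij' : ¬(j = k ∨ i = k) := fun h => hij h.symm
      rw [if_neg hij, if_neg hij']
      have q1 : dq i * ((intPos (-(Z i k)) : ℤ) : ℚ) = dq k * ((intPos (Z k i) : ℤ) : ℚ) := by
        rw [intPos_cast, intPos_cast]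
        push_cast
        rw [mul_max_of_nonneg _ _ (le_of_lt (hdq i)), mul_max_of_nonneg _ _ (le_of_lt (hdq k)),
          mul_zero, mul_zero, show dq i * (-(Z i k : ℚ)) = dq k * ((Z k i : ℚ)) from by
            linear_combination -hsk i k]
      have q2 : dq j * ((intPos (-(Z j k)) : ℤ) : ℚ) = dq k * ((intPos (Z k j) : ℤ) : ℚ) := by
        rw [intPos_cast, intPos_cast]
        push_cast
        rw [mul_max_of_nonneg _ _ (le_of_lt (hdq j)), mul_max_of_nonneg _ _ (le_of_lt (hdq k)),
          mul_zero, mul_zero, show dq j * (-(Z j k : ℚ)) = dq k * ((Z k j : ℚ)) from by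
            linear_combination -hsk j k]
      push_cast at q1 q2 ⊢
      linear_combination hsk i j + (r k : ℚ) * ((intPos (Z k j) : ℤ) : ℚ) * hsk i k
        + (r k : ℚ) * ((Z k j : ℤ) : ℚ) * q1
        + (r k : ℚ) * ((intPos (Z k i) : ℤ) : ℚ) * hsk j k
        + (r k : ℚ) * ((Z k i : ℤ) : ℚ) * q2
  · -- B-component
    intro d e
    obtain ⟨i, l⟩ := d
    obtain ⟨j, m⟩ := e
    by_cases hi : i = k
    · subst hi
      by_cases hj : j = i
      · subst hj
        simp [midB, hkk]
      · simp [midB, hj, l.isLt]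
    · by_cases hj : j = k
      · subst hj
        simp [midB, hi, m.isLt]
      · simp [midB, hi, hj]
  · -- C-component
    intro d e
    obtain ⟨i, l⟩ := d
    obtain ⟨j, m⟩ := e
    by_cases hj : j = k
    · subst hj
      simp [midC, m.isLt]
      ring
    · by_cases hi : i = k
      · subst hi
        simp [midC, hj, l.isLt]
        ring
      · simp [midC, hi, hj]
        ring
  · -- G-component
    intro d e
    obtain ⟨i, l⟩ := d
    obtain ⟨j, m⟩ := e
    by_cases hj : j = k
    · subst hj
      simp [midG, m.isLt]
    · simp [midG, hj]

lemma good_fold (hdq : ∀ i, 0 < dq i) (hr : ∀ i, 1 ≤ r i) :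
    ∀ (w : List (Fin n))
      (st : (DIdx n r → DIdx n r → ℤ) × (DIdx n r → DIdx n r → ℤ) × (DIdx n r → DIdx n r → ℤ))
      (s : Fin n → ℤ),
      (∃ Z X Y, Skew dq Z ∧ Shape r st Z X Y s) →
      ∃ Z X Y, Skew dq Z ∧ Shape r
        (List.foldl (hatStep (enlarge r B₀)) st (expandWord r w)) Z X Y
        (fun j => s j * (-1) ^ (w.count j)) := by
  intro w
  induction w with
  | nil =>
    intro st s h
    obtain ⟨Z, X, Y, hsk, hsh⟩ := h
    exact ⟨Z, X, Y, hsk, Shape.congr_s r hsh (fun j => by simp)⟩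
  | cons k w ih =>
    intro st s h
    have hexp : expandWord r (k :: w)
        = ((List.finRange (r k)).map (fun l => (⟨k, l⟩ : DIdx n r))) ++ expandWord r w := by
      simp [expandWord]
    rw [hexp, List.foldl_append]
    have hb := good_block r B₀ dq hdq k (hr k) st s h
    obtain ⟨Z, X, Y, hsk, hsh⟩ := ih _ (fun j => if j = k then -(s j) else s j) hb
    refine ⟨Z, X, Y, hsk, Shape.congr_s r hsh ?_⟩
    intro j
    by_cases hj : j = k
    · subst hj
      simp [List.count_cons, pow_succ]
    · simp [List.count_cons, hj, Ne.symm hj]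

end GcAux
/-- `G^c(w)_{(i,l),(j,m)} − σ_{j;w} δ_{(i,l),(j,m)}` is independent of
`l` and `m`. -/
theorem Gc_entry_independent_of_block_position {n : ℕ} (hn : 1 ≤ n) (r : Fin n → ℕ)
    (hr : ∀ i, 1 ≤ r i) (B₀ : Matrix (Fin n) (Fin n) ℤ)
    (hskew : ∃ d : Fin n → ℚ, (∀ i, 0 < d i) ∧
      ∀ i j, d i * (B₀ i j : ℚ) = -(d j * (B₀ j i : ℚ)))
    (w : List (Fin n)) (i j : Fin n) (l l' : Fin (r i)) (m m' : Fin (r j)) :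
    Gc r B₀ w ⟨i, l⟩ ⟨j, m⟩ - sigmaSign w j * deltaD ⟨i, l⟩ ⟨j, m⟩
      = Gc r B₀ w ⟨i, l'⟩ ⟨j, m'⟩ - sigmaSign w j * deltaD ⟨i, l'⟩ ⟨j, m'⟩ := by
  obtain ⟨dq, hdq, hsk0⟩ := hskew
  have base : ∃ Z X Y, GcAux.Skew dq Z ∧
      GcAux.Shape r ((enlarge r B₀, idMat, idMat) :
        (DIdx n r → DIdx n r → ℤ) × (DIdx n r → DIdx n r → ℤ) × (DIdx n r → DIdx n r → ℤ))
        Z X Y (fun _ => 1) :=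
    ⟨B₀, 0, 0, hsk0,
      fun d e => rfl,
      fun d e => by simp [idMat, deltaD],
      fun d e => by simp [idMat, deltaD]⟩
  obtain ⟨Z, X, Y, hsk, h1, h2, h3⟩ :=
    GcAux.good_fold r B₀ dq hdq hr w (enlarge r B₀, idMat, idMat) (fun _ => 1) base
  have hG : ∀ d e : DIdx n r,
      Gc r B₀ w d e = Y d.1 e.1 + (1 * (-1) ^ (w.count e.1)) * deltaD d e :=
    fun d e => h3 d e
  have hs : ∀ j : Fin n, (1 : ℤ) * (-1) ^ (w.count j) = sigmaSign w j := by
    intro j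
    simp [sigmaSign]
  rw [hG ⟨i, l⟩ ⟨j, m⟩, hG ⟨i, l'⟩ ⟨j, m'⟩]
  show Y i j + (1 * (-1) ^ (w.count j)) * deltaD ⟨i, l⟩ ⟨j, m⟩ - _ = _
  rw [hs j]
  ring
end
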